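/- arXiv:1607.04017 — 9 statements merged into one kernel-verified Lean document; each statement's English description precedes it below -/
import Mathlib

section
/- Let ζ_1,…,ζ_M be pairwise distinct nonzero complex numbers and c_1,…,c_M, d_1,…,d_M ∈ ℂ, let h(n) = Σ_{m=1}^M (n c_m + d_m) ζ_m^n, let S = {m : c_m ≠ 0} and M' = M + |S|, and let N > L ≥ 1 be integers. Then the Hankel matrix H ∈ ℂ^{(2N−L)×(L+1)} with entries H_{r,s} = h(r+s+1) (0 ≤ r ≤ 2N−L−1, 0 ≤ s ≤ L) factors as H = V_{2N−L} · D · V_{L+1}ᵀ, where V_l denotes the confluent Vandermonde matrix of size l×M', and D ∈ ℂ^{M'×M'} is the block-diagonal matrix whose block for an index m with c_m ≠ 0 is the 2×2 matrix [[(c_m + d_m)ζ_m, c_m ζ_m²], [c_m ζ_m², 0]], and whose block for an index m with c_m = 0 is the 1×1 matrix [d_m ζ_m]. -/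
open Matrix

/-- The confluent Vandermonde matrix: for each `m : Fin M` a column `(ζ m ^ j)_{j=0}^{l-1}`,
and for each `m ∈ S` an additional column `(j * ζ m ^ (j-1))_{j=0}^{l-1}`. -/
noncomputable def confluentVandermonde (M : ℕ) (ζ : Fin M → ℂ) (S : Finset (Fin M)) (l : ℕ) :
    Matrix (Fin l) (Fin M ⊕ {m // m ∈ S}) ℂ :=
  Matrix.of fun j col =>
    Sum.elim (fun m => ζ m ^ (j : ℕ))
      (fun m => ((j : ℕ) : ℂ) * ζ m.1 ^ ((j : ℕ) - 1)) col

/-- The block-diagonal matrix `D`: for `m` with `c m ≠ 0` (i.e. `m ∈ S`) the `2×2` block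
`[[(c_m + d_m)ζ_m, c_m ζ_m²], [c_m ζ_m², 0]]` on the index pair `(inl m, inr m)`, and for
`m` with `c m = 0` (i.e. `m ∉ S`) the `1×1` block `[d_m ζ_m]` at `(inl m, inl m)`. -/
noncomputable def blockDiagD (M : ℕ) (ζ c d : Fin M → ℂ) (S : Finset (Fin M)) :
    Matrix (Fin M ⊕ {m // m ∈ S}) (Fin M ⊕ {m // m ∈ S}) ℂ :=
  Matrix.of fun p q =>
    match p, q with
    | Sum.inl m, Sum.inl m' =>
        if m = m' then (if m ∈ S then (c m + d m) * ζ m else d m * ζ m) else 0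
    | Sum.inl m, Sum.inr m' => if m = m'.1 then c m * ζ m ^ 2 else 0
    | Sum.inr m, Sum.inl m' => if m.1 = m' then c m.1 * ζ m.1 ^ 2 else 0
    | Sum.inr _, Sum.inr _ => 0

/-- For pairwise distinct nonzero nodes `ζ_m` and coefficients `c_m, d_m`, with
`h(n) = Σ_m (n c_m + d_m) ζ_m^n`, `S = {m : c_m ≠ 0}` and integers `N > L ≥ 1`, the Hankel
matrix `H ∈ ℂ^{(2N−L)×(L+1)}` with entries `H_{r,s} = h(r+s+1)` factors as
`H = V_{2N−L} · D · V_{L+1}ᵀ`. -/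
theorem hankel_factorization (M N L : ℕ) (ζ c d : Fin M → ℂ)
    (hζ : Function.Injective ζ) (hζ0 : ∀ m, ζ m ≠ 0)
    (S : Finset (Fin M)) (hS : ∀ m, m ∈ S ↔ c m ≠ 0)
    (hL : 1 ≤ L) (hNL : L < N) :
    (Matrix.of fun (r : Fin (2 * N - L)) (s : Fin (L + 1)) =>
        ∑ m, ((((r : ℕ) + (s : ℕ) + 1 : ℕ) : ℂ) * c m + d m) * ζ m ^ ((r : ℕ) + (s : ℕ) + 1))
      = confluentVandermonde M ζ S (2 * N - L) * blockDiagD M ζ c d S *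
          (confluentVandermonde M ζ S (L + 1))ᵀ := by
  ext r s
  simp only [Matrix.mul_apply, Matrix.transpose_apply, Matrix.of_apply]
  rw [Fintype.sum_sum_type]
  simp only [Fintype.sum_sum_type]
  simp only [confluentVandermonde, blockDiagD, Matrix.of_apply, Sum.elim_inl, Sum.elim_inr,
    mul_ite, mul_zero, Finset.sum_ite_eq', Finset.mem_univ, if_true]
  simp only [Finset.univ_eq_attach, Finset.sum_const_zero, add_zero]
  rw [Finset.sum_attach S fun a => (ζ a ^ (r:ℕ) * (c a * ζ a ^ 2)) * ((s:ℕ) * ζ a ^ ((s:ℕ) - 1))]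
  conv_rhs => enter [1, 2, x]; rw [Finset.sum_attach S fun a => if a = x then ((r:ℕ):ℂ) * ζ a ^ ((r:ℕ) - 1) * (c a * ζ a ^ 2) else 0]
  simp only [Finset.sum_ite_eq']
  rw [← Finset.univ_inter S, ← Finset.sum_ite_mem, ← Finset.sum_add_distrib]
  simp only [Finset.univ_inter]
  refine Finset.sum_congr rfl fun m _ => ?_
  have key : ∀ (z : ℂ) (n : ℕ), (n : ℂ) * z ^ (n - 1) * z = (n : ℂ) * z ^ n := by
    intro z n
    cases n with
    | zero => simp
    | succ k => rw [Nat.add_sub_cancel, pow_succ]; ring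
  by_cases hm : m ∈ S
  · simp only [if_pos hm]
    push_cast
    linear_combination (-(c m * ζ m ^ (s : ℕ) * ζ m)) * key (ζ m) r +
      (-(c m * ζ m ^ (r : ℕ) * ζ m)) * key (ζ m) s
  · have hc : c m = 0 := not_not.mp (mt (hS m).mpr hm)
    simp only [if_neg hm, hc]
    push_cast
    ring
end

section
/- Let ζ_1,…,ζ_M be pairwise distinct nonzero complex numbers and c_1,…,c_M, d_1,…,d_M ∈ ℂ with (c_m, d_m) ≠ (0,0) for every m, let h(n) = Σ_{m=1}^M (n c_m + d_m) ζ_m^n, let S = {m : c_m ≠ 0} and M' = M + |S|, and let N > L ≥ M' be integers. Then the Hankel matrix H ∈ ℂ^{(2N−L)×(L+1)} with entries H_{r,s} = h(r+s+1) satisfies rank(H) = M', and the column space of H equals the column space of the confluent Vandermonde matrix V_{2N−L} ∈ ℂ^{(2N−L)×M'}. -/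
open Matrix

open Polynomial

lemma deriv_eval_zero_of_sq_dvd {p : Polynomial ℂ} {a : ℂ} (h : (X - C a) ^ 2 ∣ p) :
    p.derivative.eval a = 0 := by
  obtain ⟨r, rfl⟩ := h
  simp [derivative_mul, derivative_pow]

lemma sum_coeff_mul_deriv (q : Polynomial ℂ) {n : ℕ} (h : q.natDegree < n) (x : ℂ) :
    ∑ j ∈ Finset.range n, q.coeff j * ((j : ℂ) * x ^ (j - 1)) = q.derivative.eval x := by
  cases n with
  | zero => omega
  | succ m =>
    have hd : q.derivative.natDegree < m + 1 :=
      lt_of_le_of_lt (natDegree_derivative_le q) (by omega)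
    rw [eval_eq_sum_range' hd x, Finset.sum_range_succ', Finset.sum_range_succ]
    simp only [coeff_derivative, coeff_eq_zero_of_natDegree_lt h]
    push_cast
    simp [mul_assoc]

lemma cv_injective {M l : ℕ} (ζ : Fin M → ℂ) (S : Finset (Fin M))
    (hζ : Function.Injective ζ) (hl : M + S.card ≤ l) :
    Function.Injective (confluentVandermonde M ζ S l).mulVecLin := by
  rw [← LinearMap.ker_eq_bot, LinearMap.ker_eq_bot']
  intro v hv
  -- the per-row relations
  have hrow : ∀ j : Fin l,
      (∑ m, v (Sum.inl m) * ζ m ^ (j : ℕ)) +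
        ∑ m : {x // x ∈ S}, v (Sum.inr m) * (((j : ℕ) : ℂ) * ζ m.1 ^ ((j : ℕ) - 1)) = 0 := by
    intro j
    have h0 := congrFun hv j
    simp only [Matrix.mulVecLin_apply, Matrix.mulVec, dotProduct,
      confluentVandermonde, Matrix.of_apply, Fintype.sum_sum_type, Sum.elim_inl,
      Sum.elim_inr, Pi.zero_apply] at h0
    rw [← h0]
    congr 1 <;> exact Finset.sum_congr rfl fun m _ => by ring
  -- polynomial machinery
  set e : Fin M → ℕ := fun m => if m ∈ S then 2 else 1 with he
  have he1 : ∀ m, 1 ≤ e m := by intro m; simp only [he]; split <;> omega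
  have hsum_e : ∑ m, e m = M + S.card := by
    simp only [he]
    have : ∀ m : Fin M, (if m ∈ S then 2 else 1) = 1 + if m ∈ S then 1 else 0 := by
      intro m; split <;> rfl
    rw [Finset.sum_congr rfl fun m _ => this m, Finset.sum_add_distrib,
      Finset.sum_const, Finset.sum_ite_mem, Finset.univ_inter, Finset.sum_const]
    simp
  set Q : Fin M → Polynomial ℂ := fun m => (X - C (ζ m)) ^ e m with hQ
  have hQ0 : ∀ m, Q m ≠ 0 := fun m => pow_ne_zero _ (X_sub_C_ne_zero _)
  have hQdeg : ∀ m, (Q m).natDegree = e m := by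
    intro m; simp [hQ, natDegree_pow]
  have hQeval : ∀ m, (Q m).eval (ζ m) = 0 := by
    intro m; simp [hQ, zero_pow (by have := he1 m; omega : e m ≠ 0)]
  have hQeval_ne : ∀ m m', m ≠ m' → (Q m).eval (ζ m') ≠ 0 := by
    intro m m' hmm'
    simp only [hQ, eval_pow, eval_sub, eval_X, eval_C]
    exact pow_ne_zero _ (sub_ne_zero.mpr fun h => hmm' (hζ h).symm)
  set P : Fin M → Polynomial ℂ := fun m₀ => ∏ m ∈ Finset.univ.erase m₀, Q m with hP
  have hPdeg : ∀ m₀, (P m₀).natDegree + e m₀ = M + S.card := by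
    intro m₀
    rw [hP]
    rw [natDegree_prod _ _ fun m _ => hQ0 m]
    rw [Finset.sum_congr rfl fun m _ => hQdeg m]
    rw [← hsum_e]
    exact Finset.sum_erase_add _ _ (Finset.mem_univ m₀)
  have hPeval_zero : ∀ m₀ m, m ≠ m₀ → (P m₀).eval (ζ m) = 0 := by
    intro m₀ m hm
    rw [hP, eval_prod]
    exact Finset.prod_eq_zero (Finset.mem_erase.mpr ⟨hm, Finset.mem_univ m⟩) (hQeval m)
  have hPeval_ne : ∀ m₀, (P m₀).eval (ζ m₀) ≠ 0 := by
    intro m₀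
    rw [hP, eval_prod]
    exact Finset.prod_ne_zero_iff.mpr fun m hm =>
      hQeval_ne m m₀ (Finset.mem_erase.mp hm).1
  have hPderiv_zero : ∀ m₀ m, m ∈ S → m ≠ m₀ → (P m₀).derivative.eval (ζ m) = 0 := by
    intro m₀ m hmS hm
    apply deriv_eval_zero_of_sq_dvd
    have : (X - C (ζ m)) ^ 2 = Q m := by rw [hQ]; simp [he, hmS]
    rw [this, hP]
    exact Finset.dvd_prod_of_mem _ (Finset.mem_erase.mpr ⟨hm, Finset.mem_univ m⟩)
  -- the key evaluation identity
  have key : ∀ q : Polynomial ℂ, q.natDegree < l →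
      (∑ m, v (Sum.inl m) * q.eval (ζ m)) +
        ∑ m : {x // x ∈ S}, v (Sum.inr m) * q.derivative.eval (ζ m.1) = 0 := by
    intro q hq
    have e1 : ∀ x : ℂ, ∑ j : Fin l, q.coeff (j : ℕ) * x ^ (j : ℕ) = q.eval x := by
      intro x
      rw [Fin.sum_univ_eq_sum_range (fun j => q.coeff j * x ^ j) l]
      exact (eval_eq_sum_range' hq x).symm
    have e2 : ∀ x : ℂ, ∑ j : Fin l,
        q.coeff (j : ℕ) * (((j : ℕ) : ℂ) * x ^ ((j : ℕ) - 1)) = q.derivative.eval x := by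
      intro x
      rw [Fin.sum_univ_eq_sum_range (fun j => q.coeff j * ((j : ℂ) * x ^ (j - 1))) l]
      exact sum_coeff_mul_deriv q hq x
    calc (∑ m, v (Sum.inl m) * q.eval (ζ m)) +
          ∑ m : {x // x ∈ S}, v (Sum.inr m) * q.derivative.eval (ζ m.1)
        = ∑ j : Fin l, ((∑ m, v (Sum.inl m) * (q.coeff (j : ℕ) * ζ m ^ (j : ℕ))) +
            ∑ m : {x // x ∈ S}, v (Sum.inr m) *
              (q.coeff (j : ℕ) * (((j : ℕ) : ℂ) * ζ m.1 ^ ((j : ℕ) - 1)))) := by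
          rw [Finset.sum_add_distrib]
          congr 1
          · rw [Finset.sum_comm]
            exact Finset.sum_congr rfl fun m _ => by
              rw [← e1 (ζ m), Finset.mul_sum]
          · rw [Finset.sum_comm]
            exact Finset.sum_congr rfl fun m _ => by
              rw [← e2 (ζ m.1), Finset.mul_sum]
      _ = 0 := by
          refine Finset.sum_eq_zero fun j _ => ?_
          have h2 : (∑ m, v (Sum.inl m) * (q.coeff (j : ℕ) * ζ m ^ (j : ℕ))) +
              ∑ m : {x // x ∈ S}, v (Sum.inr m) *
                (q.coeff (j : ℕ) * (((j : ℕ) : ℂ) * ζ m.1 ^ ((j : ℕ) - 1)))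
              = q.coeff (j : ℕ) * ((∑ m, v (Sum.inl m) * ζ m ^ (j : ℕ)) +
                ∑ m : {x // x ∈ S}, v (Sum.inr m) *
                  (((j : ℕ) : ℂ) * ζ m.1 ^ ((j : ℕ) - 1))) := by
            rw [mul_add, Finset.mul_sum, Finset.mul_sum]
            congr 1 <;> exact Finset.sum_congr rfl fun m _ => by ring
          rw [h2, hrow j, mul_zero]
  -- Step 1: the S-coefficients vanish
  have hb : ∀ m₀ : {x // x ∈ S}, v (Sum.inr m₀) = 0 := by
    intro m₀
    have he2 : e m₀.1 = 2 := by simp [he, m₀.2]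
    have hq0 : P m₀.1 ≠ 0 := Finset.prod_ne_zero_iff.mpr fun m _ => hQ0 m
    have hdeg : (P m₀.1 * (X - C (ζ m₀.1))).natDegree < l := by
      rw [natDegree_mul hq0 (X_sub_C_ne_zero _), natDegree_X_sub_C]
      have := hPdeg m₀.1
      omega
    have h := key _ hdeg
    have hfirst : ∑ m, v (Sum.inl m) * (P m₀.1 * (X - C (ζ m₀.1))).eval (ζ m) = 0 := by
      refine Finset.sum_eq_zero fun m _ => ?_
      by_cases hm : m = m₀.1
      · subst hm; simp [eval_mul]
      · simp [eval_mul, hPeval_zero m₀.1 m hm]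
    have hderiv_eval : ∀ m : {x // x ∈ S},
        (P m₀.1 * (X - C (ζ m₀.1))).derivative.eval (ζ m.1)
          = if m = m₀ then (P m₀.1).eval (ζ m₀.1) else 0 := by
      intro m
      rw [derivative_mul, derivative_X_sub_C]
      by_cases hm : m = m₀
      · subst hm
        simp [hPderiv_zero]
      · have hm1 : m.1 ≠ m₀.1 := fun h => hm (Subtype.ext h)
        rw [if_neg hm]
        simp [hPderiv_zero m₀.1 m.1 m.2 hm1, hPeval_zero m₀.1 m.1 hm1]
    have hsecond : ∑ m : {x // x ∈ S},
        v (Sum.inr m) * (P m₀.1 * (X - C (ζ m₀.1))).derivative.eval (ζ m.1)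
          = v (Sum.inr m₀) * (P m₀.1).eval (ζ m₀.1) := by
      rw [Finset.sum_eq_single m₀]
      · rw [hderiv_eval m₀, if_pos rfl]
      · intro b _ hbne; rw [hderiv_eval b, if_neg hbne, mul_zero]
      · intro hm; exact absurd (Finset.mem_univ m₀) hm
    rw [hfirst, hsecond, zero_add] at h
    exact (mul_eq_zero.mp h).resolve_right (hPeval_ne m₀.1)
  -- Step 2: the plain coefficients vanish
  have ha : ∀ m₀ : Fin M, v (Sum.inl m₀) = 0 := by
    intro m₀
    have hdeg : (P m₀).natDegree < l := by have := hPdeg m₀; have := he1 m₀; omega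
    have h := key _ hdeg
    have hsecond : ∑ m : {x // x ∈ S},
        v (Sum.inr m) * (P m₀).derivative.eval (ζ m.1) = 0 :=
      Finset.sum_eq_zero fun m _ => by rw [hb m, zero_mul]
    have hfirst : ∑ m, v (Sum.inl m) * (P m₀).eval (ζ m)
        = v (Sum.inl m₀) * (P m₀).eval (ζ m₀) := by
      rw [Finset.sum_eq_single m₀]
      · intro b _ hbne; rw [hPeval_zero m₀ b hbne, mul_zero]
      · intro hm; exact absurd (Finset.mem_univ m₀) hm
    rw [hsecond, hfirst, add_zero] at h
    exact (mul_eq_zero.mp h).resolve_right (hPeval_ne m₀)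
  funext col
  cases col with
  | inl m => exact ha m
  | inr m => exact hb m

lemma dite_sum_helper {M : ℕ} (S : Finset (Fin M)) (F : ∀ m : Fin M, m ∈ S → ℂ) :
    (∑ m, if h : m ∈ S then F m h else 0) = ∑ m : {x // x ∈ S}, F m.1 m.2 := by
  rw [← Finset.sum_subset (Finset.subset_univ S)
    (fun x _ hx => by simp [hx]), ← Finset.sum_coe_sort S]
  exact Finset.sum_congr rfl fun m _ => dif_pos m.2

lemma subtype_sum_helper {M : ℕ} (S : Finset (Fin M)) (G : {x // x ∈ S} → ℂ) :
    (∑ m : {x // x ∈ S}, G m) = ∑ m : Fin M, if h : m ∈ S then G ⟨m, h⟩ else 0 :=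
  (dite_sum_helper S (fun m h => G ⟨m, h⟩)).symm

lemma mulVec_sum_split {l M : ℕ} (S : Finset (Fin M))
    (B : Matrix (Fin l) (Fin M ⊕ {m // m ∈ S}) ℂ) (u : Fin M ⊕ {m // m ∈ S} → ℂ) (j : Fin l) :
    B.mulVec u j = ∑ m : Fin M, (B j (Sum.inl m) * u (Sum.inl m) +
      if h : m ∈ S then B j (Sum.inr ⟨m, h⟩) * u (Sum.inr ⟨m, h⟩) else 0) := by
  simp only [Matrix.mulVec, dotProduct, Fintype.sum_sum_type]
  rw [Finset.sum_add_distrib]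
  congr 1
  exact subtype_sum_helper S (fun m => B j (Sum.inr m) * u (Sum.inr m))


/-- For pairwise distinct nonzero nodes `ζ_m` and coefficients `c_m, d_m` with
`(c_m, d_m) ≠ (0,0)` for every `m`, with `h(n) = Σ_m (n c_m + d_m) ζ_m^n`,
`S = {m : c_m ≠ 0}`, `M' = M + |S|` and integers `N > L ≥ M'`, the Hankel matrix
`H ∈ ℂ^{(2N−L)×(L+1)}` with entries `H_{r,s} = h(r+s+1)` has rank `M'`, and its column
space equals the column space of the confluent Vandermonde matrix `V_{2N−L}`. -/
theorem hankel_rank_and_range (M N L : ℕ) (ζ c d : Fin M → ℂ)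
    (hζ : Function.Injective ζ) (hζ0 : ∀ m, ζ m ≠ 0)
    (hcd : ∀ m, c m ≠ 0 ∨ d m ≠ 0)
    (S : Finset (Fin M)) (hS : ∀ m, m ∈ S ↔ c m ≠ 0)
    (hL : M + S.card ≤ L) (hNL : L < N) :
    (Matrix.of fun (r : Fin (2 * N - L)) (s : Fin (L + 1)) =>
        ∑ m, ((((r : ℕ) + (s : ℕ) + 1 : ℕ) : ℂ) * c m + d m)
          * ζ m ^ ((r : ℕ) + (s : ℕ) + 1)).rank = M + S.card ∧
      LinearMap.range (Matrix.of fun (r : Fin (2 * N - L)) (s : Fin (L + 1)) =>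
        ∑ m, ((((r : ℕ) + (s : ℕ) + 1 : ℕ) : ℂ) * c m + d m)
          * ζ m ^ ((r : ℕ) + (s : ℕ) + 1)).mulVecLin
        = LinearMap.range (confluentVandermonde M ζ S (2 * N - L)).mulVecLin := by
  classical
  set l := 2 * N - L with hldef
  have hlM : M + S.card ≤ l := by omega
  have hKM : M + S.card ≤ L + 1 := by omega
  set V := confluentVandermonde M ζ S l with hV
  set V' := confluentVandermonde M ζ S (L + 1) with hV'
  set W : Matrix (Fin M ⊕ {m // m ∈ S}) (Fin (L + 1)) ℂ :=
    Matrix.of (fun col s => Sum.elim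
      (fun m => ((((s : ℕ) + 1 : ℕ) : ℂ) * c m + d m) * ζ m ^ ((s : ℕ) + 1))
      (fun m => c m.1 * ζ m.1 ^ ((s : ℕ) + 2)) col) with hW
  set H : Matrix (Fin l) (Fin (L + 1)) ℂ :=
    Matrix.of (fun (r : Fin l) (s : Fin (L + 1)) =>
      ∑ m, ((((r : ℕ) + (s : ℕ) + 1 : ℕ) : ℂ) * c m + d m)
        * ζ m ^ ((r : ℕ) + (s : ℕ) + 1)) with hH
  -- the factorization H = V * W
  have hfac : H = V * W := by
    ext r s
    have hmv : (V * W) r s = V.mulVec (fun col => W col s) r := by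
      rw [Matrix.mul_apply]; rfl
    rw [hmv, mulVec_sum_split S]
    simp only [hH, Matrix.of_apply]
    refine Finset.sum_congr rfl fun m _ => ?_
    simp only [hV, hW, confluentVandermonde, Matrix.of_apply, Sum.elim_inl, Sum.elim_inr]
    by_cases hm : m ∈ S
    · rw [dif_pos hm]
      rcases Nat.eq_zero_or_pos (r : ℕ) with h0 | h0
      · rw [h0]; push_cast; ring
      · obtain ⟨r', hr'⟩ : ∃ r', (r : ℕ) = r' + 1 := ⟨(r : ℕ) - 1, by omega⟩
        rw [hr']
        simp only [Nat.add_sub_cancel]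
        push_cast
        ring
    · have hc : c m = 0 := by by_contra h; exact hm ((hS m).mpr h)
      rw [dif_neg hm, hc]
      push_cast
      ring
  -- the transposed W has independent columns
  have hWTinj : Function.Injective Wᵀ.mulVecLin := by
    rw [← LinearMap.ker_eq_bot, LinearMap.ker_eq_bot']
    intro x hx
    set z : Fin M ⊕ {m // m ∈ S} → ℂ := Sum.elim
      (fun m => (c m + d m) * ζ m * x (Sum.inl m) +
        (if h : m ∈ S then c m * ζ m ^ 2 * x (Sum.inr ⟨m, h⟩) else 0))
      (fun m => c m.1 * ζ m.1 ^ 2 * x (Sum.inl m.1)) with hz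
    have hzeq : V'.mulVecLin z = Wᵀ.mulVecLin x := by
      funext s
      rw [Matrix.mulVecLin_apply, Matrix.mulVecLin_apply, mulVec_sum_split S,
        mulVec_sum_split S]
      refine Finset.sum_congr rfl fun m _ => ?_
      simp only [hz, hV', hW, confluentVandermonde, Matrix.of_apply, Sum.elim_inl,
        Sum.elim_inr, Matrix.transpose_apply]
      by_cases hm : m ∈ S
      · rw [dif_pos hm, dif_pos hm, dif_pos hm]
        rcases Nat.eq_zero_or_pos (s : ℕ) with h0 | h0
        · rw [h0]; push_cast; ring
        · obtain ⟨s', hs'⟩ : ∃ s', (s : ℕ) = s' + 1 := ⟨(s : ℕ) - 1, by omega⟩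
          rw [hs']
          simp only [Nat.add_sub_cancel]
          push_cast
          ring
      · have hc : c m = 0 := by by_contra h; exact hm ((hS m).mpr h)
        rw [dif_neg hm, dif_neg hm, dif_neg hm, hc]
        push_cast
        ring
    have hz0 : z = 0 := cv_injective ζ S hζ hKM (by rw [hzeq, hx, map_zero])
    have hxinl : ∀ m : Fin M, x (Sum.inl m) = 0 := by
      intro m
      by_cases hm : m ∈ S
      · have h1 := congrFun hz0 (Sum.inr ⟨m, hm⟩)
        simp only [hz, Sum.elim_inr, Pi.zero_apply] at h1
        have hc : c m ≠ 0 := (hS m).mp hm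
        have := mul_eq_zero.mp h1
        rcases this with h | h
        · exact absurd h (by
            exact mul_ne_zero hc (pow_ne_zero 2 (hζ0 m)))
        · exact h
      · have hc : c m = 0 := by by_contra h; exact hm ((hS m).mpr h)
        have hd : d m ≠ 0 := (hcd m).resolve_left (by simpa using hc)
        have h1 := congrFun hz0 (Sum.inl m)
        simp only [hz, Sum.elim_inl, Pi.zero_apply, dif_neg hm, add_zero, hc, zero_add] at h1
        rcases mul_eq_zero.mp h1 with h | h
        · exact absurd h (mul_ne_zero hd (hζ0 m))
        · exact h
    funext col
    cases col with
    | inl m => exact hxinl m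
    | inr m =>
      have hm := m.2
      have h1 := congrFun hz0 (Sum.inl m.1)
      simp only [hz, Sum.elim_inl, Pi.zero_apply, dif_pos hm, hxinl m.1, mul_zero,
        zero_add] at h1
      have hc : c m.1 ≠ 0 := (hS m.1).mp hm
      rcases mul_eq_zero.mp h1 with h | h
      · exact absurd h (mul_ne_zero hc (pow_ne_zero 2 (hζ0 m.1)))
      · simpa using h
  -- W is surjective
  have hcard : Module.finrank ℂ ((Fin M ⊕ {m // m ∈ S}) → ℂ) = M + S.card := by
    rw [Module.finrank_fintype_fun_eq_card, Fintype.card_sum, Fintype.card_fin,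
      Fintype.card_coe]
  have hWsurj : Function.Surjective W.mulVecLin := by
    rw [← LinearMap.range_eq_top]
    apply Submodule.eq_top_of_finrank_eq
    have h1 : Module.finrank ℂ (LinearMap.range W.mulVecLin) = W.rank := rfl
    have h2 : W.rank = Wᵀ.rank := (Matrix.rank_transpose W).symm
    have h3 : Wᵀ.rank = M + S.card := by
      have : Wᵀ.rank = Module.finrank ℂ (LinearMap.range Wᵀ.mulVecLin) := rfl
      rw [this, LinearMap.finrank_range_of_inj hWTinj, hcard]
    rw [h1, h2, h3, hcard]
  have hVinj : Function.Injective V.mulVecLin := cv_injective ζ S hζ hlM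
  have hrange : LinearMap.range H.mulVecLin = LinearMap.range V.mulVecLin := by
    rw [hfac, Matrix.mulVecLin_mul, LinearMap.range_comp,
      LinearMap.range_eq_top.mpr hWsurj, Submodule.map_top]
  constructor
  · have h1 : H.rank = Module.finrank ℂ (LinearMap.range H.mulVecLin) := rfl
    rw [h1, hrange, LinearMap.finrank_range_of_inj hVinj, hcard]
  · exact hrange
end

section
/- Let ζ_1,…,ζ_M be pairwise distinct nonzero complex numbers and c_1,…,c_M, d_1,…,d_M ∈ ℂ with (c_m, d_m) ≠ (0,0) for every m, let h(n) = Σ_{m=1}^M (n c_m + d_m) ζ_m^n, let S = {m : c_m ≠ 0} and M' = M + |S|, and let N > L ≥ M' be integers. Let H ∈ ℂ^{(2N−L)×(L+1)} be the Hankel matrix with entries H_{r,s} = h(r+s+1). Then for any ζ ∈ ℂ, the vector φ_ζ = (1, ζ, ζ², …, ζ^{2N−L−1})ᵀ ∈ ℂ^{2N−L} lies in the column space of H if and only if ζ ∈ {ζ_1,…,ζ_M}. -/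
/-!
Pairing the coefficients of a polynomial `p` of degree `< K` with the first `K` values of
`n ↦ (n a + b) zⁿ` gives `a z p'(z) + b p(z)`. Consequently a Hankel column combination
`Σₛ xₛ h(r+s+1)` is again an extended exponential sum in `r` with the same nodes, its coefficients
obtained by evaluating `P = Σₛ xₛ X^(s+1)` and `P'` at the nodes, and the node polynomial
`Q = ∏ₘ (X - ζₘ)^μₘ`, with `μₘ = 2` exactly when `cₘ ≠ 0`, annihilates every such sum. If `φ_ξ` is a
column combination, pairing with `Q` (degree `M' < 2N - L`) gives `Q(ξ) = 0`. Conversely, for a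
node `ζₘ₀` one chooses `P` as a multiple of `X (X - ζₘ₀)^(μₘ₀ - 1) ∏_{m ≠ m₀} (X - ζₘ)^μₘ`
(degree `M' ≤ L`): the resulting sum has all coefficients zero except the constant one at `m₀`,
which is nonzero since `ζₘ₀ ≠ 0` and `(cₘ₀, dₘ₀) ≠ (0, 0)`.
-/

open Matrix Polynomial Finset

noncomputable section

variable {F ι : Type*} [Field F]

def hermiteEval (a b z : F) (p : F[X]) : F := a * (z * p.derivative.eval z) + b * p.eval z

theorem hermiteEval_C_mul (a b z k : F) (p : F[X]) :
    hermiteEval a b z (C k * p) = k * hermiteEval a b z p := by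
  simp only [hermiteEval, derivative_C_mul, eval_mul, eval_C]
  ring

theorem sum_range_coeff_mul_natCast_mul_pow {p : F[X]} {N : ℕ} (hp : p.natDegree < N) (z : F) :
    ∑ n ∈ range N, p.coeff n * ((n : F) * z ^ n) = z * p.derivative.eval z := by
  rw [derivative_eval, sum_over_range' _ (by simp) N hp, mul_sum]
  refine sum_congr rfl fun n _ => ?_
  rcases n with _ | n
  · simp
  · simp only [Nat.cast_add, Nat.cast_one, add_tsub_cancel_right, pow_succ]
    ring

theorem sum_range_coeff_mul_linear_mul_pow {p : F[X]} {N : ℕ} (hp : p.natDegree < N) (a b z : F) :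
    ∑ n ∈ range N, p.coeff n * (((n : F) * a + b) * z ^ n) = hermiteEval a b z p := by
  rw [hermiteEval, ← sum_range_coeff_mul_natCast_mul_pow hp, eval_eq_sum_range' hp, mul_sum,
    mul_sum, ← sum_add_distrib]
  exact sum_congr rfl fun n _ => by ring

theorem eval_eq_zero_of_X_sub_C_pow_dvd {p : F[X]} {z : F} {k : ℕ} (hk : k ≠ 0)
    (h : (X - C z) ^ k ∣ p) : p.eval z = 0 :=
  dvd_iff_isRoot.mp ((dvd_pow_self _ hk).trans h)

open scoped Classical in
def nodeMult (c : F) : ℕ := if c = 0 then 1 else 2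

theorem nodeMult_ne_zero (c : F) : nodeMult c ≠ 0 := by
  unfold nodeMult; split_ifs <;> simp

theorem hermiteEval_eq_zero_of_dvd {p : F[X]} {z c a b : F} (hp : (X - C z) ^ nodeMult c ∣ p)
    (ha : c = 0 → a = 0) : hermiteEval a b z p = 0 := by
  have hp0 : p.eval z = 0 := eval_eq_zero_of_X_sub_C_pow_dvd (nodeMult_ne_zero c) hp
  by_cases hc : c = 0
  · simp [hermiteEval, ha hc, hp0]
  · have hp1 : p.derivative.eval z = 0 := eval_eq_zero_of_X_sub_C_pow_dvd one_ne_zero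
      (by simpa [nodeMult, hc] using pow_sub_one_dvd_derivative_of_pow_dvd hp)
    simp [hermiteEval, hp0, hp1]

def nodePoly (T : Finset ι) (ζ : ι → F) (μ : ι → ℕ) : F[X] := ∏ m ∈ T, (X - C (ζ m)) ^ μ m

section nodePoly
variable (T : Finset ι) (ζ : ι → F) (μ : ι → ℕ)

theorem monic_nodePoly : (nodePoly T ζ μ).Monic :=
  monic_prod_of_monic _ _ fun m _ => (monic_X_sub_C (ζ m)).pow (μ m)

theorem natDegree_nodePoly : (nodePoly T ζ μ).natDegree = ∑ m ∈ T, μ m := by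
  rw [nodePoly, natDegree_prod_of_monic _ _ fun m _ => (monic_X_sub_C (ζ m)).pow (μ m)]
  simp

theorem pow_dvd_nodePoly {m : ι} (hm : m ∈ T) : (X - C (ζ m)) ^ μ m ∣ nodePoly T ζ μ :=
  dvd_prod_of_mem _ hm

theorem eval_nodePoly_ne_zero {ξ : F} (h : ∀ m ∈ T, ξ ≠ ζ m) : (nodePoly T ζ μ).eval ξ ≠ 0 := by
  rw [nodePoly, eval_prod, prod_ne_zero_iff]
  intro m hm
  simpa using pow_ne_zero _ (sub_ne_zero.2 (h m hm))

end nodePoly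

def shiftedGenPoly {n : ℕ} (x : Fin n → F) : F[X] := ∑ s, C (x s) * X ^ ((s : ℕ) + 1)

theorem eval_shiftedGenPoly {n : ℕ} (x : Fin n → F) (z : F) :
    (shiftedGenPoly x).eval z = ∑ s, x s * z ^ ((s : ℕ) + 1) := by
  simp [shiftedGenPoly, eval_finsetSum]

theorem mul_eval_derivative_shiftedGenPoly {n : ℕ} (x : Fin n → F) (z : F) :
    z * (shiftedGenPoly x).derivative.eval z =
      ∑ s : Fin n, (((s : ℕ) : F) + 1) * x s * z ^ ((s : ℕ) + 1) := by
  simp only [shiftedGenPoly, derivative_sum, derivative_C_mul_X_pow, eval_finsetSum, eval_C_mul,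
    eval_X_pow, mul_sum]
  refine sum_congr rfl fun s _ => ?_
  push_cast
  ring

theorem shiftedGenPoly_coeff_succ {n : ℕ} {p : F[X]} (h0 : p.coeff 0 = 0) (hp : p.natDegree ≤ n) :
    shiftedGenPoly (fun s : Fin n => p.coeff ((s : ℕ) + 1)) = p := by
  conv_rhs => rw [as_sum_range_C_mul_X_pow' p (Nat.lt_succ_of_le hp), sum_range_succ', h0]
  rw [map_zero, zero_mul, add_zero, shiftedGenPoly,
    Fin.sum_univ_eq_sum_range (fun s => C (p.coeff (s + 1)) * X ^ (s + 1))]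

variable [Fintype ι]

def extExpSum (ζ a b : ι → F) (n : ℕ) : F := ∑ m, ((n : F) * a m + b m) * ζ m ^ n

theorem extExpSum_zero_single [DecidableEq ι] (ζ : ι → F) (m₀ : ι) (n : ℕ) :
    extExpSum ζ 0 (Pi.single m₀ 1) n = ζ m₀ ^ n := by
  simp [extExpSum, Pi.single_apply]

theorem sum_range_coeff_mul_extExpSum (ζ a b : ι → F) {p : F[X]} {N : ℕ} (hp : p.natDegree < N) :
    ∑ n ∈ range N, p.coeff n * extExpSum ζ a b n = ∑ m, hermiteEval (a m) (b m) (ζ m) p := by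
  simp only [extExpSum, mul_sum]
  rw [sum_comm]
  exact sum_congr rfl fun m _ => sum_range_coeff_mul_linear_mul_pow hp _ _ _

theorem eval_eq_zero_of_pow_eq_extExpSum {ζ a b : ι → F} {Q : F[X]} {N : ℕ}
    (hQ : Q.natDegree < N) (hann : ∀ m, hermiteEval (a m) (b m) (ζ m) Q = 0) {ξ : F}
    (hξ : ∀ n < N, ξ ^ n = extExpSum ζ a b n) : Q.eval ξ = 0 := calc
  Q.eval ξ = ∑ n ∈ range N, Q.coeff n * ξ ^ n := eval_eq_sum_range' hQ ξ
  _ = ∑ n ∈ range N, Q.coeff n * extExpSum ζ a b n :=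
    sum_congr rfl fun n hn => by rw [hξ n (mem_range.1 hn)]
  _ = 0 := by rw [sum_range_coeff_mul_extExpSum ζ a b hQ]; exact sum_eq_zero fun m _ => hann m

theorem sum_extExpSum_mul {n : ℕ} (ζ c d : ι → F) (x : Fin n → F) (r : ℕ) :
    ∑ s : Fin n, extExpSum ζ c d (r + s + 1) * x s =
      extExpSum ζ (fun m => c m * (shiftedGenPoly x).eval (ζ m))
        (fun m => hermiteEval (c m) (d m) (ζ m) (shiftedGenPoly x)) r := by
  simp only [extExpSum, hermiteEval, mul_eval_derivative_shiftedGenPoly, eval_shiftedGenPoly,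
    sum_mul]
  rw [sum_comm]
  refine sum_congr rfl fun m _ => ?_
  simp only [add_mul, mul_sum, sum_mul, ← sum_add_distrib]
  refine sum_congr rfl fun s _ => ?_
  push_cast
  ring

theorem sum_nodeMult_eq_card_add_card {c : ι → F} {S : Finset ι} (hS : ∀ m, m ∈ S ↔ c m ≠ 0) :
    ∑ m, nodeMult (c m) = Fintype.card ι + #S := by
  classical
  have h : ∀ m, nodeMult (c m) = 1 + if m ∈ S then 1 else 0 := fun m => by
    by_cases hc : c m = 0 <;> simp [nodeMult, hS, hc]
  simp only [h, sum_add_distrib, sum_boole]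
  simp

theorem exists_poly_separating_node [DecidableEq ι] {ζ c d : ι → F} (hζ : Function.Injective ζ)
    (hζ0 : ∀ m, ζ m ≠ 0) (hcd : ∀ m, c m ≠ 0 ∨ d m ≠ 0) (m₀ : ι) :
    ∃ V : F[X], V.coeff 0 = 0 ∧ V.natDegree = ∑ m, nodeMult (c m) ∧
      (∀ m, c m * V.eval (ζ m) = 0) ∧ (∀ m ≠ m₀, hermiteEval (c m) (d m) (ζ m) V = 0) ∧
      hermiteEval (c m₀) (d m₀) (ζ m₀) V ≠ 0 := by
  set μ := fun m => nodeMult (c m)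
  set W := nodePoly (univ.erase m₀) ζ μ
  have hW : W.eval (ζ m₀) ≠ 0 :=
    eval_nodePoly_ne_zero _ _ _ fun m hm => hζ.ne (ne_of_mem_erase hm).symm
  have hdvd : ∀ m ≠ m₀, (X - C (ζ m)) ^ μ m ∣ X * (X - C (ζ m₀)) ^ (μ m₀ - 1) * W := fun m hm =>
    (pow_dvd_nodePoly _ ζ μ (mem_erase.2 ⟨hm, mem_univ m⟩)).trans (dvd_mul_left _ _)
  refine ⟨X * (X - C (ζ m₀)) ^ (μ m₀ - 1) * W, by simp [coeff_zero_eq_eval_zero], ?_,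
    fun m => ?_, fun m hm => hermiteEval_eq_zero_of_dvd (hdvd m hm) id, ?_⟩
  · rw [(monic_X.mul ((monic_X_sub_C _).pow _)).natDegree_mul (monic_nodePoly _ _ _),
      monic_X.natDegree_mul ((monic_X_sub_C _).pow _), natDegree_nodePoly, natDegree_X,
      natDegree_pow, natDegree_X_sub_C, ← add_sum_erase _ _ (mem_univ m₀)]
    have := nodeMult_ne_zero (c m₀)
    simp only [μ] at this ⊢
    omega
  · rcases eq_or_ne m m₀ with rfl | hm
    · by_cases hc : c m = 0 <;> simp [μ, nodeMult, hc]
    · rw [eval_eq_zero_of_X_sub_C_pow_dvd (nodeMult_ne_zero _) (hdvd m hm), mul_zero]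
  · by_cases hc : c m₀ = 0
    · have hd := (hcd m₀).resolve_left (not_not.2 hc)
      simp [hermiteEval, μ, nodeMult, hc, hd, hζ0, hW]
    · simp [hermiteEval, μ, nodeMult, hc, hζ0, hW, derivative_mul]

theorem exists_eq_of_sum_extExpSum_mul_eq_pow {n N : ℕ} {ζ c d : ι → F} {x : Fin n → F} {ξ : F}
    (hN : ∑ m, nodeMult (c m) < N)
    (hx : ∀ r < N, ∑ s : Fin n, extExpSum ζ c d (r + s + 1) * x s = ξ ^ r) : ∃ m, ξ = ζ m := by
  set μ := fun m => nodeMult (c m)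
  set P := shiftedGenPoly x
  have hξ : ∀ r < N, ξ ^ r = extExpSum ζ (fun m => c m * P.eval (ζ m))
      (fun m => hermiteEval (c m) (d m) (ζ m) P) r := fun r hr => by
    rw [← hx r hr, sum_extExpSum_mul]
  have hann : ∀ m, hermiteEval (c m * P.eval (ζ m)) (hermiteEval (c m) (d m) (ζ m) P) (ζ m)
      (nodePoly univ ζ μ) = 0 := fun m =>
    hermiteEval_eq_zero_of_dvd (pow_dvd_nodePoly univ ζ μ (mem_univ m)) fun hc => by simp [hc]
  have hQ := eval_eq_zero_of_pow_eq_extExpSum (by rwa [natDegree_nodePoly]) hann hξ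
  by_contra! hne
  exact eval_nodePoly_ne_zero univ ζ μ (fun m _ => hne m) hQ

theorem exists_sum_extExpSum_mul_eq_pow [DecidableEq ι] {n : ℕ} {ζ c d : ι → F}
    (hζ : Function.Injective ζ) (hζ0 : ∀ m, ζ m ≠ 0) (hcd : ∀ m, c m ≠ 0 ∨ d m ≠ 0) (m₀ : ι)
    (hn : ∑ m, nodeMult (c m) ≤ n) :
    ∃ x : Fin n → F, ∀ r, ∑ s : Fin n, extExpSum ζ c d (r + s + 1) * x s = ζ m₀ ^ r := by
  obtain ⟨V, hV0, hVdeg, hVc, hVd, hVm₀⟩ := exists_poly_separating_node hζ hζ0 hcd m₀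
  set G := C (hermiteEval (c m₀) (d m₀) (ζ m₀) V)⁻¹ * V
  have hG : shiftedGenPoly (fun s : Fin n => G.coeff ((s : ℕ) + 1)) = G :=
    shiftedGenPoly_coeff_succ (by simp [G, hV0])
      ((natDegree_C_mul_le _ _).trans (hVdeg ▸ hn))
  have ha : (fun m => c m * G.eval (ζ m)) = 0 := funext fun m => by
    simp [G, mul_left_comm (c m), hVc m]
  have hb : (fun m => hermiteEval (c m) (d m) (ζ m) G) = Pi.single m₀ 1 := funext fun m => by
    rw [hermiteEval_C_mul]
    rcases eq_or_ne m m₀ with rfl | hm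
    · simp [hVm₀]
    · simp [hVd m hm, hm]
  exact ⟨_, fun r => by rw [sum_extExpSum_mul, hG, ha, hb, extExpSum_zero_single]⟩

end

/-- For pairwise distinct nonzero nodes `ζ_m` and coefficients `c_m, d_m` with
`(c_m, d_m) ≠ (0,0)` for every `m`, with `h(n) = Σ_m (n c_m + d_m) ζ_m^n`,
`S = {m : c_m ≠ 0}`, `M' = M + |S|` and integers `N > L ≥ M'`, a vector
`φ_ζ = (1, ζ, ζ², …, ζ^{2N−L−1})ᵀ` lies in the column space of the Hankel matrix
`H ∈ ℂ^{(2N−L)×(L+1)}`, `H_{r,s} = h(r+s+1)`, if and only if `ζ ∈ {ζ_1, …, ζ_M}`. -/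
theorem testVector_mem_range_hankel_iff (M N L : ℕ) (ζ c d : Fin M → ℂ)
    (hζ : Function.Injective ζ) (hζ0 : ∀ m, ζ m ≠ 0)
    (hcd : ∀ m, c m ≠ 0 ∨ d m ≠ 0)
    (S : Finset (Fin M)) (hS : ∀ m, m ∈ S ↔ c m ≠ 0)
    (hL : M + S.card ≤ L) (hNL : L < N) (ξ : ℂ) :
    (fun n : Fin (2 * N - L) => ξ ^ (n : ℕ)) ∈
        LinearMap.range (Matrix.of fun (r : Fin (2 * N - L)) (s : Fin (L + 1)) =>
          ∑ m, ((((r : ℕ) + (s : ℕ) + 1 : ℕ) : ℂ) * c m + d m)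
            * ζ m ^ ((r : ℕ) + (s : ℕ) + 1)).mulVecLin
      ↔ ∃ m, ξ = ζ m := by
  have hμ : ∑ m, nodeMult (c m) = M + S.card := by
    rw [sum_nodeMult_eq_card_add_card hS, Fintype.card_fin]
  simp only [LinearMap.mem_range, mulVecLin_apply, funext_iff, mulVec, dotProduct, of_apply,
    Fin.forall_iff]
  constructor
  · rintro ⟨x, hx⟩
    exact exists_eq_of_sum_extExpSum_mul_eq_pow (by omega) hx
  · rintro ⟨m₀, rfl⟩
    obtain ⟨x, hx⟩ := exists_sum_extExpSum_mul_eq_pow hζ hζ0 hcd m₀ (n := L + 1) (by omega)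
    exact ⟨x, fun r _ => hx r⟩
end

section
/- Let k > 0, let t_1,…,t_P be pairwise distinct real numbers with k|t_p| < π for every p, and set ζ_p = exp(i k t_p). Let c_1,…,c_P, d_1,…,d_P ∈ ℂ with (c_p, d_p) ≠ (0,0) for every p, let h(n) = Σ_{p=1}^P (n c_p + d_p) ζ_p^n, let P' = P + |{p : c_p ≠ 0}|, and let N > L ≥ P' be integers. Let H ∈ ℂ^{(2N−L)×(L+1)} be the Hankel matrix with entries H_{r,s} = h(r+s+1). If t ∈ ℝ satisfies k|t| < π and the vector φ_t = (exp(i k n t))_{n=0}^{2N−L−1} ∈ ℂ^{2N−L} lies in the column space of H, then t ∈ {t_1,…,t_P}. -/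
open Matrix

lemma sum_coeff_mul_natCast (R : Polynomial ℂ) (z : ℂ) (n : ℕ) (h : R.natDegree ≤ n) :
    ∑ j ∈ Finset.range (n + 1), R.coeff j * (j : ℂ) * z ^ j
      = z * (Polynomial.derivative R).eval z := by
  rcases Nat.eq_zero_or_pos n with hn | hn
  · subst hn
    have h0 : R.natDegree = 0 := Nat.le_zero.mp h
    obtain ⟨a, rfl⟩ := Polynomial.natDegree_eq_zero.mp h0
    simp
  · have hd : (Polynomial.derivative R).natDegree < n :=
      lt_of_le_of_lt (Polynomial.natDegree_derivative_le R) (by omega)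
    rw [Polynomial.eval_eq_sum_range' hd, Finset.mul_sum, Finset.sum_range_succ']
    simp only [Polynomial.coeff_derivative, Nat.cast_zero, mul_zero, zero_mul, add_zero,
      pow_zero, mul_one]
    refine Finset.sum_congr rfl fun i _ => ?_
    push_cast
    ring

/-- Let `k > 0` and let `t_1, …, t_P` be pairwise distinct reals with `k|t_p| < π`, with nodes
`ζ_p = exp(i k t_p)`, coefficients `c_p, d_p` with `(c_p, d_p) ≠ (0,0)`,
`h(n) = Σ_p (n c_p + d_p) ζ_p^n`, `P' = P + |{p : c_p ≠ 0}|` and integers `N > L ≥ P'`.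
If `t ∈ ℝ` satisfies `k|t| < π` and the vector `(exp(i k n t))_{n=0}^{2N−L−1}` lies in the
column space of the Hankel matrix `H_{r,s} = h(r+s+1)`, then `t ∈ {t_1, …, t_P}`. -/
theorem testVector_mem_range_hankel_exp (P N L : ℕ) (k : ℝ) (hk : 0 < k)
    (t : Fin P → ℝ) (ht : Function.Injective t) (htπ : ∀ p, k * |t p| < Real.pi)
    (c d : Fin P → ℂ) (hcd : ∀ p, c p ≠ 0 ∨ d p ≠ 0)
    (S : Finset (Fin P)) (hS : ∀ p, p ∈ S ↔ c p ≠ 0)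
    (hL : P + S.card ≤ L) (hNL : L < N)
    (t₀ : ℝ) (ht₀ : k * |t₀| < Real.pi)
    (hmem : (fun n : Fin (2 * N - L) =>
        Complex.exp (Complex.I * (k : ℂ) * ((n : ℕ) : ℂ) * (t₀ : ℂ))) ∈
      LinearMap.range (Matrix.of fun (r : Fin (2 * N - L)) (s : Fin (L + 1)) =>
        ∑ p, ((((r : ℕ) + (s : ℕ) + 1 : ℕ) : ℂ) * c p + d p)
          * Complex.exp (Complex.I * (k : ℂ) * (t p : ℂ)) ^ ((r : ℕ) + (s : ℕ) + 1)).mulVecLin) :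
    ∃ p, t₀ = t p := by
  by_contra hcon
  push_neg at hcon
  -- node definitions
  set ζ : Fin P → ℂ := fun p => Complex.exp (Complex.I * (k : ℂ) * (t p : ℂ)) with hζ
  set ζ0 : ℂ := Complex.exp (Complex.I * (k : ℂ) * (t₀ : ℂ)) with hζ0
  -- nodes distinct from the test node
  have hζne : ∀ p, ζ0 - ζ p ≠ 0 := by
    intro p
    rw [sub_ne_zero]
    intro hEq
    rw [hζ0, Complex.exp_eq_exp_iff_exists_int] at hEq
    obtain ⟨m, hm⟩ := hEq
    have h2 : Complex.I * ((k : ℂ) * (t₀ : ℂ)) =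
        Complex.I * ((k : ℂ) * (t p : ℂ) + (m : ℂ) * (2 * (Real.pi : ℂ))) := by
      linear_combination hm
    have h3 := mul_left_cancel₀ Complex.I_ne_zero h2
    have h4 : k * t₀ = k * t p + (m : ℝ) * (2 * Real.pi) := by exact_mod_cast h3
    have habs0 : |k * t₀| < Real.pi := by rw [abs_mul, abs_of_pos hk]; exact ht₀ 
    have habsp : |k * t p| < Real.pi := by rw [abs_mul, abs_of_pos hk]; exact htπ p
    have hm0 : m = 0 := by
      by_contra hm0
      have h1 : (1 : ℝ) ≤ |(m : ℝ)| := by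
        rw [← Int.cast_abs]
        exact_mod_cast Int.one_le_abs (by omega)
      have h5 : |(m : ℝ) * (2 * Real.pi)| = |k * t₀ - k * t p| := by rw [h4]; ring_nf
      rw [abs_mul, abs_of_pos (by positivity : (0:ℝ) < 2 * Real.pi)] at h5
      have h6 : |k * t₀ - k * t p| ≤ |k * t₀| + |k * t p| := abs_sub _ _
      nlinarith [Real.pi_pos]
    rw [hm0] at h4
    push_cast at h4
    exact hcon p (mul_left_cancel₀ (ne_of_gt hk) (by linarith))
  obtain ⟨x, hx⟩ := hmem
  -- row identities for rows j = 0, …, L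
  have hrow : ∀ j : ℕ, j ≤ L →
      ∑ s : Fin (L + 1),
        (∑ p, (((j + (s : ℕ) + 1 : ℕ) : ℂ) * c p + d p) * ζ p ^ (j + (s : ℕ) + 1)) * x s
        = ζ0 ^ j := by
    intro j hj
    have hjM : j < 2 * N - L := by omega
    have hxx := congrFun hx ⟨j, hjM⟩
    simp only [Matrix.mulVecLin_apply, Matrix.mulVec, dotProduct, Matrix.of_apply] at hxx
    have hexp : ζ0 ^ j = Complex.exp (Complex.I * (k : ℂ) * (j : ℂ) * (t₀ : ℂ)) := by
      rw [hζ0, ← Complex.exp_nat_mul]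
      congr 1
      ring
    rw [hexp]
    rw [← hxx]
  -- the annihilating polynomial
  set R₁ : Polynomial ℂ := ∏ p, (Polynomial.X - Polynomial.C (ζ p)) with hR₁
  set R₂ : Polynomial ℂ := ∏ p ∈ S, (Polynomial.X - Polynomial.C (ζ p)) with hR₂
  set R : Polynomial ℂ := R₁ * R₂ with hR
  have hevalR₁ : ∀ p, R₁.eval (ζ p) = 0 := by
    intro p
    rw [hR₁, Polynomial.eval_prod]
    exact Finset.prod_eq_zero (Finset.mem_univ p) (by simp)
  have hevalR₂ : ∀ p ∈ S, R₂.eval (ζ p) = 0 := by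
    intro p hp
    rw [hR₂, Polynomial.eval_prod]
    exact Finset.prod_eq_zero hp (by simp)
  have hevalR : ∀ p, R.eval (ζ p) = 0 := by
    intro p
    rw [hR, Polynomial.eval_mul, hevalR₁ p, zero_mul]
  have hderiv : ∀ p, c p * (Polynomial.derivative R).eval (ζ p) = 0 := by
    intro p
    by_cases hc : c p = 0
    · rw [hc, zero_mul]
    · have hpS : p ∈ S := (hS p).mpr hc
      have hd0 : (Polynomial.derivative R).eval (ζ p) = 0 := by
        rw [hR, Polynomial.derivative_mul]
        simp [hevalR₁ p, hevalR₂ p hpS]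
      rw [hd0, mul_zero]
  have h1ne : R₁ ≠ 0 := (Polynomial.monic_prod_of_monic _ _ fun p _ =>
    Polynomial.monic_X_sub_C _).ne_zero
  have h2ne : R₂ ≠ 0 := (Polynomial.monic_prod_of_monic _ _ fun p _ =>
    Polynomial.monic_X_sub_C _).ne_zero
  have hd1 : R₁.natDegree = P := by
    rw [hR₁, Polynomial.natDegree_prod _ _ fun p _ => Polynomial.X_sub_C_ne_zero _]
    simp [Polynomial.natDegree_X_sub_C]
  have hd2 : R₂.natDegree = S.card := by
    rw [hR₂, Polynomial.natDegree_prod _ _ fun p _ => Polynomial.X_sub_C_ne_zero _]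
    simp [Polynomial.natDegree_X_sub_C]
  have hdegR : R.natDegree ≤ L := by
    rw [hR, Polynomial.natDegree_mul h1ne h2ne, hd1, hd2]
    exact hL
  -- R(ζ0) ≠ 0
  have hne : R.eval ζ0 ≠ 0 := by
    rw [hR, Polynomial.eval_mul, hR₁, hR₂, Polynomial.eval_prod, Polynomial.eval_prod]
    simp only [Polynomial.eval_sub, Polynomial.eval_X, Polynomial.eval_C]
    exact mul_ne_zero (Finset.prod_ne_zero_iff.mpr fun p _ => hζne p)
      (Finset.prod_ne_zero_iff.mpr fun p _ => hζne p)
  -- yet R(ζ0) = 0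
  have hzero : R.eval ζ0 = 0 := by
    have hev : R.eval ζ0 = ∑ j ∈ Finset.range (L + 1), R.coeff j * ζ0 ^ j :=
      Polynomial.eval_eq_sum_range' (Nat.lt_succ_of_le hdegR) ζ0
    rw [hev]
    have hstep : ∀ j ∈ Finset.range (L + 1), R.coeff j * ζ0 ^ j
        = ∑ s : Fin (L + 1), R.coeff j *
          ((∑ p, (((j + (s : ℕ) + 1 : ℕ) : ℂ) * c p + d p) * ζ p ^ (j + (s : ℕ) + 1)) * x s) := by
      intro j hj
      rw [← Finset.mul_sum, hrow j (by simpa using Nat.lt_succ_iff.mp (Finset.mem_range.mp hj))]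
    rw [Finset.sum_congr rfl hstep, Finset.sum_comm]
    refine Finset.sum_eq_zero fun s _ => ?_
    have hinner : ∑ j ∈ Finset.range (L + 1),
        R.coeff j * ((∑ p, (((j + (s : ℕ) + 1 : ℕ) : ℂ) * c p + d p) * ζ p ^ (j + (s : ℕ) + 1)) * x s)
        = (∑ j ∈ Finset.range (L + 1),
            ∑ p, R.coeff j * ((((j + (s : ℕ) + 1 : ℕ) : ℂ) * c p + d p) * ζ p ^ (j + (s : ℕ) + 1))) * x s := by
      rw [Finset.sum_mul]
      refine Finset.sum_congr rfl fun j _ => ?_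
      simp only [Finset.mul_sum, Finset.sum_mul, mul_assoc]
    rw [hinner]
    have hps : ∀ p, ∑ j ∈ Finset.range (L + 1),
        R.coeff j * ((((j + (s : ℕ) + 1 : ℕ) : ℂ) * c p + d p) * ζ p ^ (j + (s : ℕ) + 1)) = 0 := by
      intro p
      have hsplit : ∀ j ∈ Finset.range (L + 1),
          R.coeff j * ((((j + (s : ℕ) + 1 : ℕ) : ℂ) * c p + d p) * ζ p ^ (j + (s : ℕ) + 1))
          = R.coeff j * (j : ℂ) * ζ p ^ j * (c p * ζ p ^ ((s : ℕ) + 1))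
            + R.coeff j * ζ p ^ j * (((((s : ℕ) : ℂ) + 1) * c p + d p) * ζ p ^ ((s : ℕ) + 1)) := by
        intro j _
        have he : j + (s : ℕ) + 1 = j + ((s : ℕ) + 1) := by omega
        rw [he, pow_add]
        push_cast
        ring
      rw [Finset.sum_congr rfl hsplit, Finset.sum_add_distrib, ← Finset.sum_mul, ← Finset.sum_mul,
        sum_coeff_mul_natCast R (ζ p) L hdegR]
      have hevsum : ∑ j ∈ Finset.range (L + 1), R.coeff j * ζ p ^ j = R.eval (ζ p) :=
        (Polynomial.eval_eq_sum_range' (Nat.lt_succ_of_le hdegR) (ζ p)).symm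
      rw [hevsum, hevalR p, zero_mul, add_zero]
      have : ζ p * (Polynomial.derivative R).eval (ζ p) * (c p * ζ p ^ ((s : ℕ) + 1))
          = (c p * (Polynomial.derivative R).eval (ζ p)) * (ζ p * ζ p ^ ((s : ℕ) + 1)) := by ring
      rw [this, hderiv p, zero_mul]
    rw [Finset.sum_comm, Finset.sum_eq_zero fun p _ => hps p, zero_mul]
  exact hne hzero
end

section
/- Let d ≥ 1 and M, J ∈ ℕ with J > (d−1)·M. Let w_1,…,w_J ∈ ℝ^d be vectors such that for every subset T ⊆ {1,…,J} of cardinality d the family (w_j)_{j∈T} is linearly independent. Let z, z_1,…,z_M ∈ ℝ^d. If for every j ∈ {1,…,J} there exists m ∈ {1,…,M} with ⟨w_j, z⟩ = ⟨w_j, z_m⟩, then z ∈ {z_1,…,z_M}. -/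
/-!
Pick for every `j` an index `m j` with `⟨w_j, z⟩ = ⟨w_j, z_{m j}⟩`. Since `J > (d - 1) M`, by
pigeonhole some `m` is picked by `d` indices; those `w_j` form a basis of `ℝ^d`, and `z` and `z_m`
have the same inner products with it, hence `z = z_m`.
-/

open Finset Module

theorem LinearIndependent.eq_of_inner_eq_of_card_eq_finrank {𝕜 E ι : Type*} [RCLike 𝕜]
    [NormedAddCommGroup E] [InnerProductSpace 𝕜 E] [FiniteDimensional 𝕜 E] [Fintype ι]
    {v : ι → E} (hv : LinearIndependent 𝕜 v) (hcard : Fintype.card ι = finrank 𝕜 E)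
    {x y : E} (h : ∀ i, (inner 𝕜 (v i) x : 𝕜) = inner 𝕜 (v i) y) : x = y :=
  InnerProductSpace.ext_inner_left_basis (basisOfLinearIndependentOfCardEqFinrank' v hv hcard)
    (by simpa using h)

theorem Fintype.exists_card_eq_subset_fiber_of_mul_pred_lt_card {α β : Type*} [Fintype α]
    [Fintype β] [DecidableEq β] (f : α → β) {n : ℕ} (hn : card β * (n - 1) < card α) :
    ∃ y, ∃ T : Finset α, #T = n ∧ ∀ x ∈ T, f x = y := by
  obtain ⟨y, hy⟩ := exists_lt_card_fiber_of_mul_lt_card (f := f) hn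
  obtain ⟨T, hT, hTcard⟩ := exists_subset_card_eq (s := {x | f x = y}) (n := n) (by omega)
  exact ⟨y, T, hTcard, fun x hx => (mem_filter.mp (hT hx)).2⟩

theorem identification_definite_general (d M J : ℕ) (hJ : (d - 1) * M < J)
    (w : Fin J → EuclideanSpace ℝ (Fin d))
    (hw : ∀ T : Finset (Fin J), T.card = d →
      LinearIndependent ℝ (fun j : T => w j.1))
    (z : EuclideanSpace ℝ (Fin d)) (zs : Fin M → EuclideanSpace ℝ (Fin d))
    (h : ∀ j, ∃ m, (inner ℝ (w j) z : ℝ) = (inner ℝ (w j) (zs m) : ℝ)) :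
    ∃ m, z = zs m := by
  choose f hf using h
  obtain ⟨m, T, hTcard, hTf⟩ := Fintype.exists_card_eq_subset_fiber_of_mul_pred_lt_card f
    (n := d) (by simpa [mul_comm] using hJ)
  refine ⟨m, (hw T hTcard).eq_of_inner_eq_of_card_eq_finrank (by simp [hTcard]) fun j => ?_⟩
  rw [hf, hTf j j.2]

/-- If `J > (d−1)·M`, the vectors `w_1, …, w_J ∈ ℝ^d` are such that every `d` of them are
linearly independent, and for every `j` there exists `m` with `⟨w_j, z⟩ = ⟨w_j, z_m⟩`,
then `z ∈ {z_1, …, z_M}`. -/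
theorem identification_definite (d M J : ℕ) (hd : 1 ≤ d) (hJ : (d - 1) * M < J)
    (w : Fin J → EuclideanSpace ℝ (Fin d))
    (hw : ∀ T : Finset (Fin J), T.card = d →
      LinearIndependent ℝ (fun j : T => w j.1))
    (z : EuclideanSpace ℝ (Fin d)) (zs : Fin M → EuclideanSpace ℝ (Fin d))
    (h : ∀ j, ∃ m, (inner ℝ (w j) z : ℝ) = (inner ℝ (w j) (zs m) : ℝ)) :
    ∃ m, z = zs m :=
  identification_definite_general d M J hJ w hw z zs h
end

section
/- Let d ≥ 1, M ≥ 1, R > 0 and 0 < κ ≤ π/(2R). Let z_1,…,z_M ∈ ℝ^d be pairwise distinct with ‖z_m‖ < R for all m, let a_1,…,a_M, b_1,…,b_M ∈ ℝ satisfy either a_m > 0 for all m, or a_m < 0 for all m, or b_m > 0 for all m. Let θ, x̂_1,…,x̂_J be unit vectors in ℝ^d such that J > (d−1)·M and for every subset T ⊆ {1,…,J} of cardinality d the family (θ − x̂_j)_{j∈T} is linearly independent. Let M' = M + |{m : a_m ≠ 0}| and let N > L ≥ M' be integers. For each j define h_j(n) = Σ_{m=1}^M (n κ a_m + i b_m)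 · exp(i n κ ⟨θ − x̂_j, z_m⟩) for n ∈ ℕ, and let H^{(j)} ∈ ℂ^{(2N−L)×(L+1)} be the Hankel matrix with entries H^{(j)}_{r,s} = h_j(r+s+1) for 0 ≤ r ≤ 2N−L−1, 0 ≤ s ≤ L. Then for every z ∈ ℝ^d with ‖z‖ < R, the vector φ^{(j)}_z = (exp(i n κ ⟨θ − x̂_j, z⟩))_{n=0}^{2N−L−1} lies in the column space of H^{(j)} for every j ∈ {1,…,J} if and only if z ∈ {z_1,…,z_M}. -/
/-!
Grouping the scatterers by their phase factor `ω = exp(iκ⟨θ - x̂_j, z_m⟩)`, the data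
`h_j(n) = ∑_{ω ∈ P} (α ω + β ω n) ω^n` is an exponential polynomial whose two coefficients never
vanish together, by the definiteness assumption. Its Hankel matrix factors through the confluent
Vandermonde matrix of the nodes `P` (double where `β ≠ 0`), which has full column rank as soon as
it has at least `#P + #{β ≠ 0} ≤ M'` rows. So the column space of `H^{(j)}` is spanned by the
sequences `ω^n` and `n ω^n`, and a power sequence `x^n` lies in it iff `x ∈ P`.

Since `κ ≤ π/(2R)`, equal phase factors `exp(iκ⟨θ - x̂_j, z⟩) = exp(iκ⟨θ - x̂_j, z_m⟩)` force
`⟨θ - x̂_j, z - z_m⟩ = 0`. If this happens for every `j`, then by pigeonhole a single `m` serves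
`d` of the directions `θ - x̂_j`, which span `ℝ^d`, so `z = z_m`.
-/

open Matrix Finset

section ExpPoly

variable {K : Type*} [CommRing K]

def expPoly (P : Finset K) (α β : K → K) (n : ℕ) : K :=
  ∑ x ∈ P, (α x + β x * n) * x ^ n

lemma expPoly_shift (P : Finset K) (α β : K → K) (a : K) (n : ℕ) :
    expPoly P (fun x => (x - a) * α x + x * β x) (fun x => (x - a) * β x) n =
      expPoly P α β (n + 1) - a * expPoly P α β n := by
  simp only [expPoly, mul_sum, ← sum_sub_distrib]
  refine sum_congr rfl fun x _ => ?_
  push_cast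
  ring

lemma sum_mul_pow_eq_expPoly_image {ι : Type*} [DecidableEq K] [Fintype ι] (w a b : ι → K)
    (n : ℕ) :
    ∑ i, (a i + b i * n) * w i ^ n =
      expPoly (univ.image w) (fun x => ∑ i with w i = x, a i)
        (fun x => ∑ i with w i = x, b i) n := by
  rw [← sum_fiberwise_of_maps_to (g := w) fun i _ => mem_image_of_mem w (mem_univ i)]
  refine sum_congr rfl fun x _ => ?_
  simp only [sum_mul, ← sum_add_distrib]
  refine sum_congr rfl fun i hi => ?_
  rw [(mem_filter.mp hi).2]

def hankelMatrix (h : ℕ → K) (p q : ℕ) : Matrix (Fin p) (Fin q) K :=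
  Matrix.of fun r s => h (r + s + 1)

lemma hankelMatrix_expPoly_mulVec (P : Finset K) (α β : K → K) (p q : ℕ) (c : Fin q → K) :
    hankelMatrix (expPoly P α β) p q *ᵥ c = fun r : Fin p => expPoly P
      (fun x => α x * ∑ s, c s * x ^ ((s : ℕ) + 1) +
        β x * ∑ s, c s * (((s : ℕ) + 1 : ℕ) * x ^ ((s : ℕ) + 1)))
      (fun x => β x * ∑ s, c s * x ^ ((s : ℕ) + 1)) r := by
  funext r
  simp only [mulVec, dotProduct, hankelMatrix, of_apply, expPoly, mul_sum, sum_mul]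
  rw [sum_comm]
  refine sum_congr rfl fun x _ => ?_
  rw [← sum_add_distrib, ← sum_add_distrib, sum_mul]
  refine sum_congr rfl fun s _ => ?_
  rw [add_assoc, pow_add]
  push_cast
  ring

variable [IsDomain K]

lemma eq_zero_of_shift_eq_zero {a x : K} (hxa : x ≠ a) {α β : K → K}
    (h : (x - a) * α x + x * β x = 0 ∧ (x - a) * β x = 0) : α x = 0 ∧ β x = 0 := by
  have hxa' : x - a ≠ 0 := sub_ne_zero.mpr hxa
  have hβ : β x = 0 := (mul_eq_zero.mp h.2).resolve_left hxa'
  refine ⟨(mul_eq_zero.mp ?_).resolve_left hxa', hβ⟩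
  simpa [hβ] using h.1

/-- Injectivity of the confluent Vandermonde matrix with nodes `P`, double where `β ≠ 0`. -/
theorem eq_zero_of_expPoly_eq_zero [DecidableEq K] {P : Finset K} (hP : 0 ∉ P) {α β : K → K}
    (h : ∀ n < #P + #{x ∈ P | β x ≠ 0}, expPoly P α β n = 0) :
    ∀ x ∈ P, α x = 0 ∧ β x = 0 := by
  induction P using Finset.induction_on generalizing α β with
  | empty => simp
  | insert a s ha ih =>
    have ha0 : a ≠ 0 := fun h => hP (h ▸ mem_insert_self a s)
    have hs0 : 0 ∉ s := fun h => hP (mem_insert_of_mem h)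
    have hfilter : ∀ β : K → K, #{x ∈ s | (x - a) * β x ≠ 0} = #{x ∈ s | β x ≠ 0} :=
      fun β => congrArg card <| filter_congr fun x hx => by
        simp [sub_ne_zero.mpr (ne_of_mem_of_not_mem hx ha)]
    -- When `β a = 0`, one shift by `a` removes the node `a`.
    have hsimple : ∀ α β : K → K, β a = 0 →
        (∀ n < #s + 1 + #{x ∈ s | β x ≠ 0}, expPoly (insert a s) α β n = 0) →
        ∀ x ∈ insert a s, α x = 0 ∧ β x = 0 := by
      intro α β hβa h
      have hs : ∀ x ∈ s, α x = 0 ∧ β x = 0 := by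
        refine fun x hx => eq_zero_of_shift_eq_zero (ne_of_mem_of_not_mem hx ha)
          (ih hs0 (α := fun x => (x - a) * α x + x * β x) (β := fun x => (x - a) * β x)
            (fun n hn => ?_) x hx)
        rw [hfilter] at hn
        have := expPoly_shift (insert a s) α β a n
        rw [h n (by omega), h (n + 1) (by omega), expPoly, sum_insert ha, hβa] at this
        simpa [expPoly] using this
      have h0 := h 0 (by omega)
      rw [expPoly, sum_insert ha, sum_eq_zero fun x hx => by simp [hs x hx]] at h0
      simp only [pow_zero, mul_one, Nat.cast_zero, mul_zero, add_zero] at h0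
      intro x hx
      rcases mem_insert.mp hx with rfl | hx
      · exact ⟨h0, hβa⟩
      · exact hs x hx
    by_cases hβa : β a = 0
    · refine hsimple α β hβa fun n hn => h n ?_
      rw [filter_insert, if_neg (by simpa using hβa), card_insert_of_notMem ha]
      omega
    · -- Otherwise a first shift makes the coefficient of `n` vanish at `a`.
      have hlen : #(insert a s) + #{x ∈ insert a s | β x ≠ 0} =
          #s + 1 + #{x ∈ s | β x ≠ 0} + 1 := by
        rw [filter_insert, if_pos hβa, card_insert_of_notMem ha,
          card_insert_of_notMem (by simp [ha])]
        ring
      have hshift := hsimple (fun x => (x - a) * α x + x * β x) (fun x => (x - a) * β x)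
        (by simp) fun n hn => by
          rw [hfilter] at hn
          rw [expPoly_shift, h n (by omega), h (n + 1) (by omega), mul_zero, sub_zero]
      simpa [ha0, hβa] using (hshift a (mem_insert_self a s)).1

lemma mem_of_forall_pow_eq_expPoly [DecidableEq K] {P : Finset K} (hP : 0 ∉ P) {α β : K → K}
    {x : K} (hx : x ≠ 0) (h : ∀ n < #P + #{y ∈ P | β y ≠ 0} + 1, x ^ n = expPoly P α β n) :
    x ∈ P := by
  by_contra hxP
  have hxP0 : 0 ∉ insert x P := by simp [hx.symm, hP]
  have hfilter : {y ∈ insert x P | Function.update (-β) x 0 y ≠ 0} = {y ∈ P | β y ≠ 0} := by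
    ext y
    by_cases hy : y = x
    · simp [hy, hxP]
    · simp [hy]
  have hrest : ∀ n : ℕ, ∑ y ∈ P, (Function.update (-α) x 1 y + Function.update (-β) x 0 y * n)
      * y ^ n = -expPoly P α β n := fun n => by
    rw [expPoly, ← sum_neg_distrib]
    refine sum_congr rfl fun y hy => ?_
    simp only [Function.update_of_ne (ne_of_mem_of_not_mem hy hxP), Pi.neg_apply]
    ring
  have := eq_zero_of_expPoly_eq_zero hxP0 (α := Function.update (-α) x 1)
    (β := Function.update (-β) x 0) fun n hn => by
      rw [hfilter, card_insert_of_notMem hxP] at hn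
      rw [expPoly, sum_insert hxP, hrest, ← h n (by omega)]
      simp
  simp at this

theorem mem_of_pow_mem_range_hankelMatrix [DecidableEq K] {P : Finset K} (hP : 0 ∉ P)
    {α β : K → K} {p q : ℕ} (hp : #P + #{x ∈ P | β x ≠ 0} < p) {x : K} (hx : x ≠ 0)
    (hmem : (fun r : Fin p => x ^ (r : ℕ)) ∈
      LinearMap.range (hankelMatrix (expPoly P α β) p q).mulVecLin) : x ∈ P := by
  obtain ⟨c, hc⟩ := hmem
  rw [mulVecLin_apply, hankelMatrix_expPoly_mulVec] at hc
  set B : K → K := fun x => β x * ∑ s, c s * x ^ ((s : ℕ) + 1)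
  have hB : #{x ∈ P | B x ≠ 0} ≤ #{x ∈ P | β x ≠ 0} :=
    card_le_card <| monotone_filter_right P fun _ _ => left_ne_zero_of_mul
  exact mem_of_forall_pow_eq_expPoly hP hx (β := B) fun n hn =>
    (congrFun hc ⟨n, by omega⟩).symm

-- Hermite conditions on `g = ∑ s, c s * X ^ (s + 1)`: row `inl x` is `g x`, row `inr x` is
-- `x * g' x`.
def hermiteMatrix (P Q : Finset K) (q : ℕ) : Matrix (P ⊕ Q) (Fin q) K :=
  Matrix.of <| Sum.elim (fun x s => (x : K) ^ ((s : ℕ) + 1))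
    (fun x s => (((s : ℕ) + 1 : ℕ) : K) * x ^ ((s : ℕ) + 1))

theorem linearIndependent_row_hermiteMatrix {P Q : Finset K} (hP : 0 ∉ P) (hQ : Q ⊆ P) {q : ℕ}
    (hq : #P + #Q ≤ q) : LinearIndependent K (hermiteMatrix P Q q).row := by
  classical
  rw [Fintype.linearIndependent_iff]
  intro g hg
  let y : K → K := fun x => if h : x ∈ P then g (.inl ⟨x, h⟩) else 0
  let z : K → K := fun x => if h : x ∈ Q then g (.inr ⟨x, h⟩) else 0
  have hrow : ∀ s : Fin q, expPoly P (fun x => x * (y x + z x)) (fun x => x * z x) s =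
      ∑ i, g i * hermiteMatrix P Q q i s := by
    intro s
    have hy : ∑ x ∈ P, y x * x ^ ((s : ℕ) + 1) = ∑ x : P, g (.inl x) * x ^ ((s : ℕ) + 1) := by
      rw [← sum_coe_sort P]
      exact sum_congr rfl fun x _ => by simp [y]
    have hz : ∑ x ∈ P, z x * ((((s : ℕ) + 1 : ℕ) : K) * x ^ ((s : ℕ) + 1)) =
        ∑ x : Q, g (.inr x) * ((((s : ℕ) + 1 : ℕ) : K) * x ^ ((s : ℕ) + 1)) := by
      rw [← sum_subset hQ fun x _ hx => by simp [z, hx], ← sum_coe_sort Q]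
      exact sum_congr rfl fun x _ => by simp [z]
    rw [Fintype.sum_sum_type]
    simp only [hermiteMatrix, of_apply, Sum.elim_inl, Sum.elim_inr, ← hy, ← hz, expPoly,
      ← sum_add_distrib]
    refine sum_congr rfl fun x _ => ?_
    push_cast
    ring
  have hzQ : #{x ∈ P | x * z x ≠ 0} ≤ #Q := card_le_card fun x hx => by
    by_contra hxQ
    simp [z, hxQ] at hx
  have hyz := eq_zero_of_expPoly_eq_zero hP (α := fun x => x * (y x + z x))
      (β := fun x => x * z x) fun n hn => by
    refine (hrow ⟨n, by omega⟩).trans ?_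
    simpa [Matrix.row] using congrFun hg ⟨n, by omega⟩
  have h0 : ∀ x ∈ P, y x = 0 ∧ z x = 0 := fun x hx => by
    obtain ⟨hyz, hz⟩ : y x + z x = 0 ∧ z x = 0 := by
      simpa [ne_of_mem_of_not_mem hx hP] using hyz x hx
    exact ⟨by simpa [hz] using hyz, hz⟩
  rintro (⟨x, hx⟩ | ⟨x, hx⟩)
  · simpa [y, hx] using (h0 x hx).1
  · simpa [z, hx] using (h0 x (hQ hx)).2

end ExpPoly

lemma Matrix.mulVec_surjective_of_linearIndependent_row {m n K : Type*} [Field K] [Fintype m]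
    [Fintype n] {A : Matrix m n K} (h : LinearIndependent K A.row) :
    Function.Surjective A.mulVec := by
  have : LinearMap.range A.mulVecLin = ⊤ := Submodule.eq_top_of_finrank_eq <| by
    rw [← Matrix.rank, h.rank_matrix, Module.finrank_fintype_fun_eq_card]
  exact LinearMap.range_eq_top.mp this

section Hankel

variable {K : Type*} [Field K]

theorem exists_hermite_interpolation {P Q : Finset K} (hP : 0 ∉ P) (hQ : Q ⊆ P) {q : ℕ}
    (hq : #P + #Q ≤ q) (u v : K → K) :
    ∃ c : Fin q → K, (∀ x ∈ P, ∑ s, c s * x ^ ((s : ℕ) + 1) = u x) ∧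
      ∀ x ∈ Q, ∑ s, c s * (((s : ℕ) + 1 : ℕ) * x ^ ((s : ℕ) + 1)) = v x := by
  obtain ⟨c, hc⟩ := Matrix.mulVec_surjective_of_linearIndependent_row
    (linearIndependent_row_hermiteMatrix hP hQ hq) (Sum.elim (fun x => u x) (fun x => v x))
  refine ⟨c, fun x hx => ?_, fun x hx => ?_⟩
  · simpa [hermiteMatrix, mulVec, dotProduct, mul_comm] using congrFun hc (.inl ⟨x, hx⟩)
  · simpa [hermiteMatrix, mulVec, dotProduct, mul_comm] using congrFun hc (.inr ⟨x, hx⟩)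

theorem pow_mem_range_hankelMatrix [DecidableEq K] {P : Finset K} (hP : 0 ∉ P) {α β : K → K}
    (hdef : ∀ x ∈ P, α x ≠ 0 ∨ β x ≠ 0) {p q : ℕ} (hq : #P + #{x ∈ P | β x ≠ 0} ≤ q)
    {x₀ : K} (hx₀ : x₀ ∈ P) :
    (fun r : Fin p => x₀ ^ (r : ℕ)) ∈
      LinearMap.range (hankelMatrix (expPoly P α β) p q).mulVecLin := by
  -- Interpolate so that the coefficients of `hankelMatrix_expPoly_mulVec` become `(δ_{x₀}, 0)`.
  obtain ⟨c, hu, hv⟩ := exists_hermite_interpolation hP (filter_subset _ P) hq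
    (Pi.single x₀ (if β x₀ = 0 then (α x₀)⁻¹ else 0)) (Pi.single x₀ (β x₀)⁻¹)
  refine ⟨c, ?_⟩
  rw [mulVecLin_apply, hankelMatrix_expPoly_mulVec]
  funext r
  calc _ = ∑ x ∈ P, if x = x₀ then x ^ (r : ℕ) else 0 := sum_congr rfl fun x hx => ?_
    _ = x₀ ^ (r : ℕ) := by simp [hx₀]
  by_cases hβ : β x = 0
  · have hα : x = x₀ → α x ≠ 0 := fun _ => (hdef x hx).resolve_right (not_not.mpr hβ)
    simp only [hu x hx]
    by_cases hxx₀ : x = x₀ <;> simp_all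
  · simp only [hu x hx, hv x (mem_filter.mpr ⟨hx, hβ⟩)]
    by_cases hxx₀ : x = x₀ <;> simp_all

theorem pow_mem_range_hankelMatrix_iff [DecidableEq K] {P : Finset K} (hP : 0 ∉ P)
    {α β : K → K} (hdef : ∀ x ∈ P, α x ≠ 0 ∨ β x ≠ 0) {p q : ℕ}
    (hq : #P + #{x ∈ P | β x ≠ 0} ≤ q) (hp : #P + #{x ∈ P | β x ≠ 0} < p) {x : K}
    (hx : x ≠ 0) :
    (fun r : Fin p => x ^ (r : ℕ)) ∈
      LinearMap.range (hankelMatrix (expPoly P α β) p q).mulVecLin ↔ x ∈ P :=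
  ⟨mem_of_pow_mem_range_hankelMatrix hP hp hx, pow_mem_range_hankelMatrix hP hdef hq⟩

end Hankel

section Music

open Complex

lemma cexp_I_mul_natCast_mul (κ x : ℝ) (n : ℕ) :
    exp (I * (n : ℂ) * κ * x) = exp (I * κ * x) ^ n := by
  rw [← exp_nat_mul]
  ring_nf

lemma sum_ofReal_ne_zero_of_sign {ι : Type*} {s : Finset ι} (hs : s.Nonempty) {f : ι → ℝ}
    (hf : (∀ i, 0 < f i) ∨ (∀ i, f i < 0)) : ∑ i ∈ s, (f i : ℂ) ≠ 0 := by
  push_cast [← ofReal_sum, ofReal_ne_zero]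
  rcases hf with hf | hf
  · exact (sum_pos (fun i _ => hf i) hs).ne'
  · exact (sum_neg (fun i _ => hf i) hs).ne

theorem cexp_mem_range_hankel_iff {ι : Type*} [Fintype ι] {κ : ℝ} (hκ : κ ≠ 0) {a b : ι → ℝ}
    (hsign : (∀ m, 0 < a m) ∨ (∀ m, a m < 0) ∨ (∀ m, 0 < b m))
    {S : Finset ι} (hS : ∀ m, m ∈ S ↔ a m ≠ 0) {p q : ℕ} (hq : Fintype.card ι + #S ≤ q)
    (hp : Fintype.card ι + #S < p) (t : ι → ℝ) (H : Matrix (Fin p) (Fin q) ℂ)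
    (hH : ∀ r s, H r s = ∑ m, ((((r : ℕ) + (s : ℕ) + 1 : ℕ) : ℂ) * κ * a m + I * b m) *
        exp (I * (((r : ℕ) + (s : ℕ) + 1 : ℕ) : ℂ) * κ * t m)) (τ : ℝ) :
    (fun n : Fin p => exp (I * ((n : ℕ) : ℂ) * κ * τ)) ∈ LinearMap.range H.mulVecLin ↔
      ∃ m, exp (I * κ * τ) = exp (I * κ * t m) := by
  classical
  set w : ι → ℂ := fun m => exp (I * κ * t m)
  set P := univ.image w
  set α : ℂ → ℂ := fun x => ∑ m with w m = x, I * b m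
  set β : ℂ → ℂ := fun x => ∑ m with w m = x, (κ : ℂ) * a m
  have hHankel : H = hankelMatrix (expPoly P α β) p q := by
    ext r s
    rw [hH, hankelMatrix, of_apply, ← sum_mul_pow_eq_expPoly_image]
    refine sum_congr rfl fun m _ => ?_
    rw [cexp_I_mul_natCast_mul]
    ring
  have hP : (0 : ℂ) ∉ P := by simp [P, w, exp_ne_zero]
  have hdef : ∀ x ∈ P, α x ≠ 0 ∨ β x ≠ 0 := by
    intro x hx
    obtain ⟨m₀, -, rfl⟩ := mem_image.mp hx
    have hne : ({m | w m = w m₀} : Finset ι).Nonempty := ⟨m₀, by simp⟩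
    simp only [α, β, ← mul_sum]
    rcases hsign with ha | ha | hb
    · exact .inr (mul_ne_zero (ofReal_ne_zero.mpr hκ) (sum_ofReal_ne_zero_of_sign hne (.inl ha)))
    · exact .inr (mul_ne_zero (ofReal_ne_zero.mpr hκ) (sum_ofReal_ne_zero_of_sign hne (.inr ha)))
    · exact .inl (mul_ne_zero I_ne_zero (sum_ofReal_ne_zero_of_sign hne (.inl hb)))
  have hcard : #P + #{x ∈ P | β x ≠ 0} ≤ Fintype.card ι + #S := by
    have hP : #P ≤ Fintype.card ι := card_image_le
    have hβ : #{x ∈ P | β x ≠ 0} ≤ #S := by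
      refine (card_le_card fun x hx => ?_).trans (card_image_le (s := S) (f := w))
      obtain ⟨m, hm, hma⟩ := exists_ne_zero_of_sum_ne_zero (mem_filter.mp hx).2
      refine mem_image.mpr ⟨m, (hS m).mpr ?_, (mem_filter.mp hm).2⟩
      exact_mod_cast right_ne_zero_of_mul hma
    omega
  rw [hHankel, funext fun n : Fin p => cexp_I_mul_natCast_mul κ τ n,
    pow_mem_range_hankelMatrix_iff hP hdef (hcard.trans hq) (by omega) (exp_ne_zero _)]
  simp [P, w, eq_comm]

theorem inner_sub_eq_zero_of_cexp_eq {E : Type*} [NormedAddCommGroup E] [InnerProductSpace ℝ E]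
    {v y z : E} {R κ : ℝ} (hκ0 : 0 < κ) (hκ : κ ≤ Real.pi / (2 * R)) (hv : ‖v‖ ≤ 2)
    (hy : ‖y‖ < R) (hz : ‖z‖ < R)
    (h : exp (I * κ * inner ℝ v y) = exp (I * κ * inner ℝ v z)) : inner ℝ v (y - z) = 0 := by
  obtain ⟨k, hk⟩ := exp_eq_exp_iff_exists_int.mp h
  have hk : κ * inner ℝ v (y - z) = 2 * Real.pi * k := by
    have := congrArg im hk
    simp only [mul_im, I_re, ofReal_re, I_im, ofReal_im, intCast_re, intCast_im, re_ofNat,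
      im_ofNat, mul_re, add_im] at this
    rw [inner_sub_right]
    linarith
  have hR : 0 < R := (norm_nonneg y).trans_lt hy
  have hbound : |κ * inner ℝ v (y - z)| < 2 * Real.pi := by
    have hyz : ‖y - z‖ < 2 * R := (norm_sub_le y z).trans_lt (by linarith)
    have hκR : κ * (2 * R) ≤ Real.pi := (le_div_iff₀ (by positivity)).mp hκ
    calc |κ * inner ℝ v (y - z)| = κ * |inner ℝ v (y - z)| := by
          rw [abs_mul, abs_of_pos hκ0]
      _ ≤ κ * (‖v‖ * ‖y - z‖) := by gcongr; exact abs_real_inner_le_norm v (y - z)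
      _ ≤ κ * (2 * ‖y - z‖) := by gcongr
      _ < κ * (2 * (2 * R)) := by gcongr
      _ ≤ 2 * Real.pi := by linarith
  have hk0 : k = 0 := by
    rw [hk, abs_mul, abs_of_pos Real.two_pi_pos, mul_lt_iff_lt_one_right Real.two_pi_pos]
      at hbound
    exact Int.abs_lt_one_iff.mp (by exact_mod_cast hbound)
  simpa [hk0, hκ0.ne'] using hk

end Music

theorem exists_eq_zero_of_forall_exists_inner_eq_zero {E ι μ : Type*} [NormedAddCommGroup E]
    [InnerProductSpace ℝ E] [FiniteDimensional ℝ E] [Fintype ι] [Fintype μ] {v : ι → E}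
    (hv : ∀ T : Finset ι, #T = Module.finrank ℝ E → LinearIndependent ℝ (fun j : T => v j))
    (hcard : (Module.finrank ℝ E - 1) * Fintype.card μ < Fintype.card ι) {u : μ → E}
    (h : ∀ j, ∃ m, inner ℝ (v j) (u m) = 0) : ∃ m, u m = 0 := by
  classical
  choose f hf using h
  obtain ⟨m, -, hm⟩ := exists_lt_card_fiber_of_mul_lt_card_of_maps_to (s := univ) (t := univ)
    (f := f) (n := Module.finrank ℝ E - 1) (fun j _ => mem_univ _)
    (by rwa [card_univ, card_univ, mul_comm])
  obtain ⟨T, hTm, hT⟩ := exists_subset_card_eq (s := {j | f j = m}) (n := Module.finrank ℝ E)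
    (by omega)
  have hspan := (hv T hT).span_eq_top_of_card_eq_finrank' (by simpa using hT)
  have hle : Submodule.span ℝ (Set.range fun j : T => v j) ≤
      LinearMap.ker (innerₛₗ ℝ (u m)) := by
    refine Submodule.span_le.mpr ?_
    rintro _ ⟨j, rfl⟩
    have hj : f j = m := (mem_filter.mp (hTm j.2)).2
    simpa [real_inner_comm, hj] using hf j
  rw [hspan] at hle
  exact ⟨m, inner_self_eq_zero.mp (hle Submodule.mem_top)⟩

theorem music_identification_definite_general (d M J N L : ℕ)
    (R κ : ℝ) (hκ0 : 0 < κ) (hκ : κ ≤ Real.pi / (2 * R))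
    (z : Fin M → EuclideanSpace ℝ (Fin d))
    (hzR : ∀ m, ‖z m‖ < R)
    (a b : Fin M → ℝ)
    (hsign : (∀ m, 0 < a m) ∨ (∀ m, a m < 0) ∨ (∀ m, 0 < b m))
    (θ : EuclideanSpace ℝ (Fin d)) (hθ : ‖θ‖ = 1)
    (xhat : Fin J → EuclideanSpace ℝ (Fin d)) (hxhat : ∀ j, ‖xhat j‖ = 1)
    (hJ : (d - 1) * M < J)
    (hindep : ∀ T : Finset (Fin J), T.card = d →
      LinearIndependent ℝ (fun j : T => θ - xhat j.1))
    (S : Finset (Fin M)) (hS : ∀ m, m ∈ S ↔ a m ≠ 0)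
    (hL : M + S.card ≤ L) (hNL : L < N)
    (H : Fin J → Matrix (Fin (2 * N - L)) (Fin (L + 1)) ℂ)
    (hH : ∀ j r s, H j r s =
      ∑ m, ((((r : ℕ) + (s : ℕ) + 1 : ℕ) : ℂ) * (κ : ℂ) * (a m : ℂ)
              + Complex.I * (b m : ℂ)) *
        Complex.exp (Complex.I * (((r : ℕ) + (s : ℕ) + 1 : ℕ) : ℂ) * (κ : ℂ)
          * ((inner ℝ (θ - xhat j) (z m) : ℝ) : ℂ))) :
    ∀ zz : EuclideanSpace ℝ (Fin d), ‖zz‖ < R →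
      ((∀ j, (fun n : Fin (2 * N - L) =>
            Complex.exp (Complex.I * ((n : ℕ) : ℂ) * (κ : ℂ)
              * ((inner ℝ (θ - xhat j) zz : ℝ) : ℂ))) ∈
          LinearMap.range (H j).mulVecLin)
        ↔ ∃ m, zz = z m) := by
  intro zz hzz
  simp only [fun j => cexp_mem_range_hankel_iff hκ0.ne' hsign hS (by simp; omega)
    (by simp; omega) (fun m => inner ℝ (θ - xhat j) (z m)) (H j) (hH j)
    (inner ℝ (θ - xhat j) zz)]
  refine ⟨fun h => ?_, fun ⟨m, hm⟩ j => ⟨m, hm ▸ rfl⟩⟩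
  have hv : ∀ j, ‖θ - xhat j‖ ≤ 2 := fun j =>
    (norm_sub_le _ _).trans (by rw [hθ, hxhat]; norm_num)
  obtain ⟨m, hm⟩ := exists_eq_zero_of_forall_exists_inner_eq_zero (v := fun j => θ - xhat j)
    (u := fun m => zz - z m) (fun T hT => hindep T (by simpa using hT)) (by simpa using hJ)
    fun j => (h j).imp fun m hm => inner_sub_eq_zero_of_cexp_eq hκ0 hκ (hv j) hzz (hzR m) hm
  exact ⟨m, sub_eq_zero.mp hm⟩

/-- Identification theorem for the multifrequency MUSIC algorithm under the definiteness
assumption: with `0 < κ ≤ π/(2R)`, pairwise distinct scatterer positions `z_m` in the open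
ball of radius `R`, coefficients `a_m, b_m` all of a fixed sign (all `a_m > 0`, or all
`a_m < 0`, or all `b_m > 0`), unit incident direction `θ` and unit receiver directions
`x̂_j` with `J > (d−1)M` such that every `d` of the vectors `θ − x̂_j` are linearly
independent, `M' = M + |{m : a_m ≠ 0}|`, `N > L ≥ M'`, and Hankel matrices
`H^{(j)}_{r,s} = h_j(r+s+1)` with `h_j(n) = Σ_m (nκa_m + i b_m) exp(inκ⟨θ−x̂_j, z_m⟩)`:
a point `z` with `‖z‖ < R` satisfies `φ^{(j)}_z ∈ 𝓡(H^{(j)})` for all `j` if and only if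
`z ∈ {z_1, …, z_M}`. -/
theorem music_identification_definite (d M J N L : ℕ) (hd : 1 ≤ d) (hM : 1 ≤ M)
    (R κ : ℝ) (hR : 0 < R) (hκ0 : 0 < κ) (hκ : κ ≤ Real.pi / (2 * R))
    (z : Fin M → EuclideanSpace ℝ (Fin d)) (hzinj : Function.Injective z)
    (hzR : ∀ m, ‖z m‖ < R)
    (a b : Fin M → ℝ)
    (hsign : (∀ m, 0 < a m) ∨ (∀ m, a m < 0) ∨ (∀ m, 0 < b m))
    (θ : EuclideanSpace ℝ (Fin d)) (hθ : ‖θ‖ = 1)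
    (xhat : Fin J → EuclideanSpace ℝ (Fin d)) (hxhat : ∀ j, ‖xhat j‖ = 1)
    (hJ : (d - 1) * M < J)
    (hindep : ∀ T : Finset (Fin J), T.card = d →
      LinearIndependent ℝ (fun j : T => θ - xhat j.1))
    (S : Finset (Fin M)) (hS : ∀ m, m ∈ S ↔ a m ≠ 0)
    (hL : M + S.card ≤ L) (hNL : L < N)
    (H : Fin J → Matrix (Fin (2 * N - L)) (Fin (L + 1)) ℂ)
    (hH : ∀ j r s, H j r s =
      ∑ m, ((((r : ℕ) + (s : ℕ) + 1 : ℕ) : ℂ) * (κ : ℂ) * (a m : ℂ)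
              + Complex.I * (b m : ℂ)) *
        Complex.exp (Complex.I * (((r : ℕ) + (s : ℕ) + 1 : ℕ) : ℂ) * (κ : ℂ)
          * ((inner ℝ (θ - xhat j) (z m) : ℝ) : ℂ))) :
    ∀ zz : EuclideanSpace ℝ (Fin d), ‖zz‖ < R →
      ((∀ j, (fun n : Fin (2 * N - L) =>
            Complex.exp (Complex.I * ((n : ℕ) : ℂ) * (κ : ℂ)
              * ((inner ℝ (θ - xhat j) zz : ℝ) : ℂ))) ∈
          LinearMap.range (H j).mulVecLin)
        ↔ ∃ m, zz = z m) :=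
  music_identification_definite_general d M J N L R κ hκ0 hκ z hzR a b hsign θ hθ xhat hxhat hJ
    hindep S hS hL hNL H hH
end

section
/- Let d ≥ 1 and M, J ∈ ℕ. Let z_1,…,z_M ∈ ℝ^d be pairwise distinct, and let w_1,…,w_J ∈ ℝ^d be vectors such that for every subset T ⊆ {1,…,J} of cardinality d the family (w_j)_{j∈T} is linearly independent. Then for every l ∈ {1,…,M}, the number of indices j ∈ {1,…,J} for which there exists m ≠ l with ⟨w_j, z_l⟩ = ⟨w_j, z_m⟩ is at most (d−1)·(M−1). -/
/-!
If `j` is counted, then `⟨w_j, z_l - z_m⟩ = 0` for some `m ≠ l`, i.e. `w_j` lies in the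
hyperplane `(z_l - z_m)ᗮ`. A hyperplane has dimension `d - 1`, so it contains at most `d - 1`
of the `w_j`, since any `d` of them are independent. Summing over the `M - 1` choices of `m`
gives the bound.
-/

open Module Finset

theorem card_lt_of_forall_mem_of_finrank_lt {K V ι : Type*} [DivisionRing K] [AddCommGroup V]
    [Module K V] {n : ℕ} {w : ι → V}
    (hw : ∀ T : Finset ι, #T = n → LinearIndependent K (fun j : T => w j))
    {U : Submodule K V} [FiniteDimensional K U] (hU : finrank K U < n)
    {s : Finset ι} (hs : ∀ j ∈ s, w j ∈ U) : #s < n := by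
  by_contra! hcard
  obtain ⟨T, hTs, hT⟩ := exists_subset_card_eq hcard
  have hli : LinearIndependent K (fun j : T => (⟨w j, hs j (hTs j.2)⟩ : U)) :=
    .of_comp U.subtype (hw T hT)
  have := hli.fintype_card_le_finrank
  rw [Fintype.card_coe, hT] at this
  omega

theorem finrank_orthogonal_span_singleton_lt {𝕜 E : Type*} [RCLike 𝕜] [NormedAddCommGroup E]
    [InnerProductSpace 𝕜 E] [FiniteDimensional 𝕜 E] {v : E} (hv : v ≠ 0) :
    finrank 𝕜 (𝕜 ∙ v)ᗮ < finrank 𝕜 E := by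
  have := Submodule.finrank_add_finrank_orthogonal (𝕜 ∙ v)
  rw [finrank_span_singleton hv] at this
  omega

theorem card_filter_inner_eq_zero_lt {𝕜 E ι : Type*} [RCLike 𝕜] [NormedAddCommGroup E]
    [InnerProductSpace 𝕜 E] [FiniteDimensional 𝕜 E] [Fintype ι] {w : ι → E}
    (hw : ∀ T : Finset ι, #T = finrank 𝕜 E → LinearIndependent 𝕜 (fun j : T => w j))
    {v : E} (hv : v ≠ 0) :
    #{j | inner 𝕜 (w j) v = 0} < finrank 𝕜 E := by
  refine card_lt_of_forall_mem_of_finrank_lt hw (finrank_orthogonal_span_singleton_lt hv) ?_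
  intro j hj
  exact Submodule.mem_orthogonal_singleton_iff_inner_left.2 (mem_filter.1 hj).2

theorem counting_bound_general (d M J : ℕ)
    (z : Fin M → EuclideanSpace ℝ (Fin d)) (hz : Function.Injective z)
    (w : Fin J → EuclideanSpace ℝ (Fin d))
    (hw : ∀ T : Finset (Fin J), T.card = d →
      LinearIndependent ℝ (fun j : T => w j.1))
    (l : Fin M) :
    {j : Fin J | ∃ m, m ≠ l ∧ (inner ℝ (w j) (z l) : ℝ) = (inner ℝ (w j) (z m) : ℝ)}.ncard
      ≤ (d - 1) * (M - 1) := by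
  have hset : {j : Fin J | ∃ m, m ≠ l ∧ (inner ℝ (w j) (z l) : ℝ) = (inner ℝ (w j) (z m) : ℝ)}
      = ↑((univ.erase l).biUnion fun m => {j | inner ℝ (w j) (z l - z m) = 0}) := by
    ext j
    simp [inner_sub_right, sub_eq_zero]
  have hfinrank : finrank ℝ (EuclideanSpace ℝ (Fin d)) = d := finrank_euclideanSpace_fin
  rw [hset, Set.ncard_coe_finset]
  calc _ ≤ #(univ.erase l) * (d - 1) := card_biUnion_le_card_mul _ _ _ fun m hm => ?_
    _ = (d - 1) * (M - 1) := by rw [card_erase_of_mem (mem_univ l), card_fin, mul_comm]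
  have hzlm : z l - z m ≠ 0 := sub_ne_zero.2 (hz.ne (mem_erase.1 hm).1.symm)
  have := card_filter_inner_eq_zero_lt (𝕜 := ℝ) (fun T hT => hw T (hT.trans hfinrank)) hzlm
  omega

/-- For pairwise distinct points `z_1, …, z_M ∈ ℝ^d` and vectors `w_1, …, w_J ∈ ℝ^d` such
that every `d` of them are linearly independent, for each `l` the number of indices `j`
for which `⟨w_j, z_l⟩ = ⟨w_j, z_m⟩` for some `m ≠ l` is at most `(d−1)(M−1)`. -/
theorem counting_bound (d M J : ℕ) (hd : 1 ≤ d)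
    (z : Fin M → EuclideanSpace ℝ (Fin d)) (hz : Function.Injective z)
    (w : Fin J → EuclideanSpace ℝ (Fin d))
    (hw : ∀ T : Finset (Fin J), T.card = d →
      LinearIndependent ℝ (fun j : T => w j.1))
    (l : Fin M) :
    {j : Fin J | ∃ m, m ≠ l ∧ (inner ℝ (w j) (z l) : ℝ) = (inner ℝ (w j) (z m) : ℝ)}.ncard
      ≤ (d - 1) * (M - 1) :=
  counting_bound_general d M J z hz w hw l
end

section
/- Let d ≥ 1, M ≥ 1 and J ∈ ℕ. Let w_1,…,w_J ∈ ℝ^d be vectors such that for every subset T ⊆ {1,…,J} of cardinality d the family (w_j)_{j∈T} is linearly independent, and let z, z_1,…,z_M ∈ ℝ^d. If the number of indices j ∈ {1,…,J} for which there exists m ∈ {1,…,M} with ⟨w_j, z⟩ = ⟨w_j, z_m⟩ is at least (d−1)·M + 1, then z ∈ {z_1,…,z_M}. -/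
/-! If `⟪w_j, z⟫ = ⟪w_j, z_m⟫` for more than `(d - 1) M` indices `j`, then by pigeonhole a single
`m` serves at least `d` of them. Those `d` vectors `w_j` form a basis of `ℝ^d`, and `z - z_m` is
orthogonal to each of them, hence `z = z_m`. -/

open Module

theorem Finset.exists_subset_card_eq_forall_of_mul_lt_card {α β : Type*} [Fintype β]
    (P : α → β → Prop) {s : Finset α} (hs : ∀ a ∈ s, ∃ b, P a b) {n : ℕ}
    (hn : (n - 1) * Fintype.card β < s.card) :
    ∃ b, ∃ t ⊆ s, t.card = n ∧ ∀ a ∈ t, P a b := by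
  classical
  suffices ∃ b, n ≤ (s.filter (P · b)).card by
    obtain ⟨b, hb⟩ := this
    obtain ⟨t, hts, htn⟩ := Finset.exists_subset_card_eq hb
    exact ⟨b, t, hts.trans (Finset.filter_subset _ _), htn,
      fun a ha => (Finset.mem_filter.mp (hts ha)).2⟩
  by_contra! hsmall
  have hcover : s ⊆ Finset.univ.biUnion fun b => s.filter (P · b) := fun a ha => by
    obtain ⟨b, hab⟩ := hs a ha
    exact Finset.mem_biUnion.mpr ⟨b, Finset.mem_univ b, Finset.mem_filter.mpr ⟨ha, hab⟩⟩
  have : s.card ≤ (n - 1) * Fintype.card β := calc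
    s.card ≤ ∑ b, (s.filter (P · b)).card :=
      (Finset.card_le_card hcover).trans Finset.card_biUnion_le
    _ ≤ ∑ _b : β, (n - 1) := Finset.sum_le_sum fun b _ => by have := hsmall b; omega
    _ = (n - 1) * Fintype.card β := by simp [mul_comm]
  omega

theorem LinearIndependent.eq_of_forall_inner_eq_of_card_eq_finrank
    {𝕜 E ι : Type*} [RCLike 𝕜] [NormedAddCommGroup E] [InnerProductSpace 𝕜 E]
    [FiniteDimensional 𝕜 E] [Fintype ι] {w : ι → E} (hw : LinearIndependent 𝕜 w)
    (hcard : Fintype.card ι = finrank 𝕜 E) {x y : E}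
    (h : ∀ i, (inner 𝕜 (w i) x : 𝕜) = inner 𝕜 (w i) y) : x = y :=
  InnerProductSpace.ext_inner_left_basis (basisOfLinearIndependentOfCardEqFinrank' w hw hcard) fun i => by
    simpa [basisOfLinearIndependentOfCardEqFinrank'] using h i

theorem identification_general_general (d M J : ℕ)
    (w : Fin J → EuclideanSpace ℝ (Fin d))
    (hw : ∀ T : Finset (Fin J), T.card = d →
      LinearIndependent ℝ (fun j : T => w j.1))
    (z : EuclideanSpace ℝ (Fin d)) (zs : Fin M → EuclideanSpace ℝ (Fin d))
    (h : (d - 1) * M + 1 ≤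
      {j : Fin J | ∃ m, (inner ℝ (w j) z : ℝ) = (inner ℝ (w j) (zs m) : ℝ)}.ncard) :
    ∃ m, z = zs m := by
  classical
  set S := {j : Fin J | ∃ m, (inner ℝ (w j) z : ℝ) = (inner ℝ (w j) (zs m) : ℝ)}
  have hS : (d - 1) * Fintype.card (Fin M) < S.toFinset.card := by
    rw [Fintype.card_fin, ← Set.ncard_eq_toFinset_card']
    omega
  obtain ⟨m, T, -, hTd, hT⟩ := Finset.exists_subset_card_eq_forall_of_mul_lt_card
    (fun j m => (inner ℝ (w j) z : ℝ) = inner ℝ (w j) (zs m))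
    (fun j hj => (Set.mem_toFinset (s := S)).mp hj) hS
  refine ⟨m, (hw T hTd).eq_of_forall_inner_eq_of_card_eq_finrank ?_ fun j => hT j j.2⟩
  simp [hTd]

/-- If the vectors `w_1, …, w_J ∈ ℝ^d` are such that every `d` of them are linearly
independent and the number of indices `j` for which `⟨w_j, z⟩ = ⟨w_j, z_m⟩` for some `m`
is at least `(d−1)·M + 1`, then `z ∈ {z_1, …, z_M}`. -/
theorem identification_general (d M J : ℕ) (hd : 1 ≤ d) (hM : 1 ≤ M)
    (w : Fin J → EuclideanSpace ℝ (Fin d))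
    (hw : ∀ T : Finset (Fin J), T.card = d →
      LinearIndependent ℝ (fun j : T => w j.1))
    (z : EuclideanSpace ℝ (Fin d)) (zs : Fin M → EuclideanSpace ℝ (Fin d))
    (h : (d - 1) * M + 1 ≤
      {j : Fin J | ∃ m, (inner ℝ (w j) z : ℝ) = (inner ℝ (w j) (zs m) : ℝ)}.ncard) :
    ∃ m, z = zs m :=
  identification_general_general d M J w hw z zs h
end

section
/- For every x, z ∈ ℝ³ and every r ≥ 0, the integral of the function y ↦ ‖x − y‖⁻¹ over the closed ball of radius r centered at z, with respect to Lebesgue measure on ℝ³, is at most 2πr². -/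
open MeasureTheory Set Real

-- volume of closed ball in R^3
lemma vol_cb3 (w : EuclideanSpace ℝ (Fin 3)) (s : ℝ) (hs : 0 ≤ s) :
    volume (Metric.closedBall w s) = ENNReal.ofReal (4 / 3 * π * s ^ 3) := by
  rw [EuclideanSpace.volume_closedBall]
  have hcard : (Fintype.card (Fin 3) : ℝ) = 3 := by simp
  have hG : Real.Gamma ((Fintype.card (Fin 3) : ℝ) / 2 + 1) = 3 / 4 * Real.sqrt π := by
    rw [hcard, Real.Gamma_add_one (by norm_num), show (3:ℝ)/2 = 1/2 + 1 by norm_num,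
      Real.Gamma_add_one (by norm_num), Real.Gamma_one_half_eq]
    ring
  have hsq : Real.sqrt π ^ 2 = π := Real.sq_sqrt pi_pos.le
  have hspos : 0 < Real.sqrt π := Real.sqrt_pos.mpr pi_pos
  have hC : Real.sqrt π ^ Fintype.card (Fin 3) / Real.Gamma ((Fintype.card (Fin 3) : ℝ) / 2 + 1)
      = 4 / 3 * π := by
    rw [hG]
    have : Real.sqrt π ^ Fintype.card (Fin 3) = π * Real.sqrt π := by
      simp only [Fintype.card_fin]
      rw [pow_succ, hsq]
    rw [this]
    field_simp
  rw [hC, Fintype.card_fin, ← ENNReal.ofReal_pow hs, ← ENNReal.ofReal_mul (by positivity)]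
  ring_nf

/-- For every `x, z ∈ ℝ³` and `r ≥ 0`, the integral of `y ↦ ‖x − y‖⁻¹` over the closed
ball of radius `r` centered at `z` is at most `2πr²`. -/
theorem integral_inv_norm_closedBall_le (x z : EuclideanSpace ℝ (Fin 3)) (r : ℝ)
    (hr : 0 ≤ r) :
    ∫ y in Metric.closedBall z r, ‖x - y‖⁻¹ ≤ 2 * Real.pi * r ^ 2 := by
  rcases hr.eq_or_lt with h0 | hr
  · subst h0
    simp [Metric.closedBall_zero]
  set B := Metric.closedBall z r
  set μ := volume.restrict B with hμ
  have hmeas : Measurable (fun y : EuclideanSpace ℝ (Fin 3) => ‖x - y‖⁻¹) :=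
    ((measurable_const.sub measurable_id).norm).inv
  have hnn : 0 ≤ᵐ[μ] fun y => ‖x - y‖⁻¹ :=
    Filter.Eventually.of_forall fun y => by positivity
  rw [integral_eq_lintegral_of_nonneg_ae hnn hmeas.aestronglyMeasurable]
  have key : (∫⁻ y, ENNReal.ofReal ‖x - y‖⁻¹ ∂μ) ≤ ENNReal.ofReal (2 * π * r ^ 2) := by
    rw [lintegral_eq_lintegral_meas_le μ hnn hmeas.aemeasurable]
    have hsplit : Ioi (0:ℝ) = Ioc 0 r⁻¹ ∪ Ioi r⁻¹ := (Ioc_union_Ioi_eq_Ioi (by positivity)).symm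
    rw [hsplit, lintegral_union measurableSet_Ioi Ioc_disjoint_Ioi_same]
    have h1 : (∫⁻ t in Ioc (0:ℝ) r⁻¹, μ {a | t ≤ ‖x - a‖⁻¹}) ≤
        ENNReal.ofReal (4 / 3 * π * r ^ 2) := by
      calc (∫⁻ t in Ioc (0:ℝ) r⁻¹, μ {a | t ≤ ‖x - a‖⁻¹})
          ≤ ∫⁻ _ in Ioc (0:ℝ) r⁻¹, ENNReal.ofReal (4 / 3 * π * r ^ 3) := by
            refine lintegral_mono fun t => ?_
            calc μ {a | t ≤ ‖x - a‖⁻¹} ≤ volume B := by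
                  rw [hμ, Measure.restrict_apply' (by exact measurableSet_closedBall)]
                  exact measure_mono inter_subset_right
              _ = ENNReal.ofReal (4 / 3 * π * r ^ 3) := vol_cb3 z r hr.le
        _ = ENNReal.ofReal (4 / 3 * π * r ^ 3) * ENNReal.ofReal r⁻¹ := by
            rw [setLIntegral_const, Real.volume_Ioc, sub_zero]
        _ = ENNReal.ofReal (4 / 3 * π * r ^ 2) := by
            rw [← ENNReal.ofReal_mul (by positivity)]
            congr 1
            field_simp
    have h2 : (∫⁻ t in Ioi r⁻¹, μ {a | t ≤ ‖x - a‖⁻¹}) ≤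
        ENNReal.ofReal (2 / 3 * π * r ^ 2) := by
      have hb : ∀ t ∈ Ioi r⁻¹, μ {a | t ≤ ‖x - a‖⁻¹} ≤ ENNReal.ofReal (4 / 3 * π * (t⁻¹) ^ 3) := by
        intro t ht
        have ht0 : (0:ℝ) < t := lt_trans (by positivity) ht
        have hsub : {a : EuclideanSpace ℝ (Fin 3) | t ≤ ‖x - a‖⁻¹} ⊆ Metric.closedBall x t⁻¹ := by
          intro y hy
          simp only [mem_setOf_eq] at hy
          have hn : 0 < ‖x - y‖ := by
            by_contra h
            push_neg at h
            have : ‖x - y‖ = 0 := le_antisymm h (norm_nonneg _)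
            rw [this] at hy
            simp at hy
            linarith
          have : ‖x - y‖ ≤ t⁻¹ := by
            rw [← inv_inv ‖x - y‖]
            exact inv_anti₀ ht0 hy
          simpa [Metric.mem_closedBall, dist_eq_norm, norm_sub_rev] using this
        calc μ {a | t ≤ ‖x - a‖⁻¹} ≤ volume {a : EuclideanSpace ℝ (Fin 3) | t ≤ ‖x - a‖⁻¹} :=
              Measure.restrict_le_self _
          _ ≤ volume (Metric.closedBall x t⁻¹) := measure_mono hsub
          _ = ENNReal.ofReal (4 / 3 * π * (t⁻¹) ^ 3) := vol_cb3 x t⁻¹ (by positivity)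
      calc (∫⁻ t in Ioi r⁻¹, μ {a | t ≤ ‖x - a‖⁻¹})
          ≤ ∫⁻ t in Ioi r⁻¹, ENNReal.ofReal (4 / 3 * π * (t⁻¹) ^ 3) :=
            setLIntegral_mono' measurableSet_Ioi hb
        _ = ENNReal.ofReal (∫ t in Ioi r⁻¹, 4 / 3 * π * (t⁻¹) ^ 3) := by
            rw [← ofReal_integral_eq_lintegral_ofReal]
            · have heq : EqOn (fun t : ℝ => 4 / 3 * π * (t⁻¹) ^ 3)
                  (fun t : ℝ => 4 / 3 * π * t ^ (-3 : ℝ)) (Ioi r⁻¹) := by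
                intro t ht
                have ht0 : (0:ℝ) < t := lt_trans (by positivity) ht
                simp only
                rw [Real.rpow_neg ht0.le, show t ^ (3:ℝ) = t ^ (3:ℕ) from Real.rpow_natCast t 3,
                  ← inv_pow]
              have hint : IntegrableOn (fun t : ℝ => 4/3*π*t^(-3:ℝ)) (Ioi r⁻¹) :=
                (integrableOn_Ioi_rpow_of_lt (by norm_num : (-3:ℝ) < -1)
                  (by positivity : (0:ℝ) < r⁻¹)).const_mul (4/3*π)
              exact hint.congr_fun heq.symm measurableSet_Ioi
            · filter_upwards [self_mem_ae_restrict measurableSet_Ioi] with t ht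
              have ht0 : (0:ℝ) < t := lt_trans (by positivity) ht
              positivity
        _ ≤ ENNReal.ofReal (2 / 3 * π * r ^ 2) := by
            apply ENNReal.ofReal_le_ofReal
            have heq : ∀ t ∈ Ioi r⁻¹, 4 / 3 * π * (t⁻¹) ^ 3 = 4 / 3 * π * t ^ (-3 : ℝ) := by
              intro t ht
              have ht0 : (0:ℝ) < t := lt_trans (by positivity) ht
              rw [Real.rpow_neg ht0.le, show t ^ (3:ℝ) = t ^ (3:ℕ) from Real.rpow_natCast t 3,
                ← inv_pow]
            rw [setIntegral_congr_fun measurableSet_Ioi heq, integral_const_mul,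
              integral_Ioi_rpow_of_lt (by norm_num) (by positivity)]
            have h3 : (r⁻¹ : ℝ) ^ ((-3:ℝ) + 1) = r ^ 2 := by
              rw [show ((-3:ℝ) + 1) = -(2:ℝ) by norm_num, Real.rpow_neg (by positivity),
                show (r⁻¹) ^ (2:ℝ) = (r⁻¹) ^ (2:ℕ) from Real.rpow_natCast r⁻¹ 2, ← inv_pow]
              norm_num
            rw [h3]
            ring_nf
            rfl
    calc _ ≤ ENNReal.ofReal (4 / 3 * π * r ^ 2) + ENNReal.ofReal (2 / 3 * π * r ^ 2) :=
          add_le_add h1 h2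
      _ = ENNReal.ofReal (2 * π * r ^ 2) := by
          rw [← ENNReal.ofReal_add (by positivity) (by positivity)]
          congr 1
          ring
  exact ENNReal.toReal_le_of_le_ofReal (by positivity) key
end
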